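/- arXiv:1706.02558 — 6 statements merged into one kernel-verified Lean document; each statement's English description precedes it below -/
import Mathlib

section
/- Quadratic-form bound for the Swift–Hohenberg operator (Lemma 3.2): Let ρ>0 and let C₂>0 be a constant such that |w_ρ''(x)| ≤ C₂ w_ρ(x) for all x∈ℝ, where w_ρ(x) = (1+x²)^{−ρ/2}. Then for every v ∈ C_c^∞(ℝ), ∫_ℝ w_ρ(x) v(x)·(−(v + 2v'' + v''''))(x) dx ≤ −(C₂/(1+2C₂)) ∫_ℝ w_ρ (v'')² dx + C₂(3 + (5/2)C₂) ∫_ℝ w_ρ v² dx. (Here −(1+∂_x²)²v = −(v + 2v'' + v'''') is the Swift–Hohenberg operator L₀ applied to v.) -/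
open MeasureTheory Set

/-- The weight `w_ρ(x) = (1+x²)^{-ρ/2}`. -/
noncomputable def wgt (ρ x : ℝ) : ℝ := (1 + x ^ 2) ^ (-(ρ / 2))

open Function
open scoped ContDiff
set_option maxHeartbeats 1000000


lemma int_deriv_zero (h : ℝ → ℝ) (hd : ContDiff ℝ ∞ h) (hs : HasCompactSupport h) :
    ∫ x : ℝ, deriv h x = 0 := by
  have hone : (1 : WithTop ℕ∞) ≤ ∞ := by exact_mod_cast le_top
  obtain ⟨R, hR⟩ := (hs.isBounded).subset_closedBall 0
  set S := |R| + 1 with hS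
  have hR' : tsupport h ⊆ Ioo (-S) S := by
    refine hR.trans ?_
    intro x hx
    simp only [Metric.mem_closedBall, Real.dist_eq, sub_zero] at hx
    constructor <;> [nlinarith [le_abs_self R, neg_abs_le x, le_abs_self x];
      nlinarith [le_abs_self R, neg_abs_le x, le_abs_self x]]
  have hSle : -S ≤ S := by nlinarith [abs_nonneg R]
  have hderiv_supp : support (deriv h) ⊆ Ioo (-S) S :=
    (support_deriv_subset).trans hR'
  have h1 : ∫ x : ℝ, deriv h x = ∫ x in Icc (-S) S, deriv h x := by
    rw [setIntegral_eq_integral_of_forall_compl_eq_zero]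
    intro x hx
    by_contra hne
    exact hx (Ioo_subset_Icc_self (hderiv_supp hne))
  have hdiff : ∀ x : ℝ, DifferentiableAt ℝ h x := fun x => (hd.differentiable (by simp)) x
  have h2 : ∫ x in (-S)..S, deriv h x = h S - h (-S) := by
    apply intervalIntegral.integral_deriv_eq_sub (fun x _ => hdiff x)
    exact ((hd.continuous_deriv hone).intervalIntegrable _ _)
  have h3 : h S = 0 := image_eq_zero_of_notMem_tsupport (fun hc => by
    have := hR' hc; simp at this)
  have h4 : h (-S) = 0 := image_eq_zero_of_notMem_tsupport (fun hc => by
    have := hR' hc; simp at this)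
  rw [h1, MeasureTheory.integral_Icc_eq_integral_Ioc, ← intervalIntegral.integral_of_le hSle,
    h2, h3, h4, sub_zero]

lemma ibp (f g : ℝ → ℝ) (hf : ContDiff ℝ ∞ f) (hg : ContDiff ℝ ∞ g)
    (hs : HasCompactSupport g) :
    ∫ x : ℝ, deriv f x * g x = - ∫ x : ℝ, f x * deriv g x := by
  have hone : (1 : WithTop ℕ∞) ≤ ∞ := by exact_mod_cast le_top
  have hfg : ContDiff ℝ ∞ (fun x => f x * g x) := hf.mul hg
  have hz := int_deriv_zero (fun x => f x * g x) hfg (hs.mul_left)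
  have hd : ∀ x, deriv (fun x => f x * g x) x = deriv f x * g x + f x * deriv g x := by
    intro x
    exact deriv_fun_mul ((hf.differentiable (by simp)) x) ((hg.differentiable (by simp)) x)
  rw [funext hd] at hz
  have hint1 : Integrable (fun x => deriv f x * g x) := by
    apply Continuous.integrable_of_hasCompactSupport
    · exact (hf.continuous_deriv hone).mul (hg.continuous)
    · exact hs.mul_left
  have hint2 : Integrable (fun x => f x * deriv g x) := by
    apply Continuous.integrable_of_hasCompactSupport
    · exact hf.continuous.mul (hg.continuous_deriv hone)
    · exact hs.deriv.mul_left
  rw [integral_add hint1 hint2] at hz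
  linarith

lemma wgt_contDiff (ρ : ℝ) : ContDiff ℝ ∞ (wgt ρ) := by
  apply ContDiff.rpow_const_of_ne
  · exact contDiff_const.add (contDiff_id.pow 2)
  · intro x; positivity

lemma wgt_pos (ρ x : ℝ) : 0 < wgt ρ x := by
  unfold wgt; positivity

lemma ibp3 (a b c : ℝ → ℝ) (ha : ContDiff ℝ ∞ a) (hb : ContDiff ℝ ∞ b)
    (hc : ContDiff ℝ ∞ c) (hsc : HasCompactSupport c) :
    ∫ x : ℝ, deriv a x * (b x * c x) =
      (- ∫ x : ℝ, a x * (deriv b x * c x)) - ∫ x : ℝ, a x * (b x * deriv c x) := by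
  have hone : (1 : WithTop ℕ∞) ≤ ∞ := by exact_mod_cast le_top
  have h := ibp a (fun x => b x * c x) ha (hb.mul hc) (hsc.mul_left)
  have hd : deriv (fun x => b x * c x) = fun x => deriv b x * c x + b x * deriv c x :=
    funext fun x => deriv_fun_mul ((hb.differentiable (by simp)) x) ((hc.differentiable (by simp)) x)
  rw [hd] at h
  have h1 : Integrable (fun x => a x * (deriv b x * c x)) := by
    apply Continuous.integrable_of_hasCompactSupport
    · exact ha.continuous.mul ((hb.continuous_deriv hone).mul hc.continuous)
    · exact hsc.mul_left.mul_left
  have h2 : Integrable (fun x => a x * (b x * deriv c x)) := by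
    apply Continuous.integrable_of_hasCompactSupport
    · exact ha.continuous.mul (hb.continuous.mul (hc.continuous_deriv hone))
    · exact (hsc.deriv.mul_left).mul_left
  rw [h, show (fun x => a x * (deriv b x * c x + b x * deriv c x))
      = fun x => a x * (deriv b x * c x) + a x * (b x * deriv c x) from
      funext fun x => by ring, integral_add h1 h2]
  ring

/-- Quadratic-form bound for the Swift–Hohenberg operator `L₀ = -(1+∂_x²)²`
(Lemma 3.2): for all `v ∈ C_c^∞(ℝ)`,
`∫ w_ρ v L₀v ≤ -(C₂/(1+2C₂)) ∫ w_ρ (v'')² + C₂(3 + (5/2)C₂) ∫ w_ρ v²`. -/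
theorem swift_hohenberg_quadratic_form_bound
    (ρ C₂ : ℝ) (hρ : 0 < ρ) (hC₂ : 0 < C₂)
    (hw : ∀ x : ℝ, |deriv (deriv (wgt ρ)) x| ≤ C₂ * wgt ρ x)
    (v : ℝ → ℝ) (hv : ContDiff ℝ (⊤ : ℕ∞) v) (hsupp : HasCompactSupport v) :
    (∫ x : ℝ, wgt ρ x *
        (v x * (-(v x + 2 * iteratedDeriv 2 v x + iteratedDeriv 4 v x)))) ≤
      -(C₂ / (1 + 2 * C₂)) * (∫ x : ℝ, wgt ρ x * (iteratedDeriv 2 v x) ^ 2)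
        + C₂ * (3 + (5 / 2) * C₂) * (∫ x : ℝ, wgt ρ x * v x ^ 2) := by
  set w : ℝ → ℝ := wgt ρ with hwdef
  set w1 : ℝ → ℝ := deriv w with hw1def
  set w2 : ℝ → ℝ := deriv w1 with hw2def
  set v1 : ℝ → ℝ := deriv v with hv1def
  set v2 : ℝ → ℝ := deriv v1 with hv2def
  set v3 : ℝ → ℝ := deriv v2 with hv3def
  set v4 : ℝ → ℝ := deriv v3 with hv4def
  have hiter2 : iteratedDeriv 2 v = v2 := by
    rw [show (2:ℕ) = 1 + 1 from rfl, iteratedDeriv_succ, iteratedDeriv_one]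
  have hiter4 : iteratedDeriv 4 v = v4 := by
    rw [show (4:ℕ) = 3 + 1 from rfl, iteratedDeriv_succ,
      show (3:ℕ) = 2 + 1 from rfl, iteratedDeriv_succ,
      show (2:ℕ) = 1 + 1 from rfl, iteratedDeriv_succ, iteratedDeriv_one]
  rw [hiter2, hiter4]
  -- smoothness
  have hcv : ContDiff ℝ ∞ v := hv.of_le (by simp)
  have hcw : ContDiff ℝ ∞ w := wgt_contDiff ρ
  have hcw1 : ContDiff ℝ ∞ w1 := (contDiff_infty_iff_deriv.mp hcw).2
  have hcw2 : ContDiff ℝ ∞ w2 := (contDiff_infty_iff_deriv.mp hcw1).2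
  have hcv1 : ContDiff ℝ ∞ v1 := (contDiff_infty_iff_deriv.mp hcv).2
  have hcv2 : ContDiff ℝ ∞ v2 := (contDiff_infty_iff_deriv.mp hcv1).2
  have hcv3 : ContDiff ℝ ∞ v3 := (contDiff_infty_iff_deriv.mp hcv2).2
  have hcv4 : ContDiff ℝ ∞ v4 := (contDiff_infty_iff_deriv.mp hcv3).2
  have hsv1 : HasCompactSupport v1 := hsupp.deriv
  have hsv2 : HasCompactSupport v2 := hsv1.deriv
  have hsv3 : HasCompactSupport v3 := hsv2.deriv
  have hwpos : ∀ x, 0 < w x := fun x => wgt_pos ρ x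
  -- integrability helper
  have intg : ∀ (a b : ℝ → ℝ), Continuous a → Continuous b → HasCompactSupport b →
      Integrable (fun x => a x * b x) := fun a b ha hb hs =>
    (ha.mul hb).integrable_of_hasCompactSupport hs.mul_left
  have cw := hcw.continuous
  have cw1 := hcw1.continuous
  have cw2 := hcw2.continuous
  have cv := hcv.continuous
  have cv1 := hcv1.continuous
  have cv2 := hcv2.continuous
  have cv3 := hcv3.continuous
  have cv4 := hcv4.continuous
  -- named integrals
  set I0 : ℝ := ∫ x : ℝ, w x * (v x * v x) with hI0
  set I2 : ℝ := ∫ x : ℝ, w x * (v2 x * v2 x) with hI2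
  set A : ℝ := ∫ x : ℝ, w x * (v x * v2 x) with hA
  set B : ℝ := ∫ x : ℝ, w2 x * (v x * v2 x) with hB
  set E : ℝ := ∫ x : ℝ, w x * (v1 x * v1 x) with hE
  set Cq : ℝ := ∫ x : ℝ, w2 x * (v1 x * v1 x) with hCq
  set D0 : ℝ := ∫ x : ℝ, w2 x * (v x * v x) with hD0
  set U : ℝ := ∫ x : ℝ, w1 x * (v1 x * v2 x) with hU
  set M : ℝ := ∫ x : ℝ, w1 x * (v x * v1 x) with hM
  set J : ℝ := ∫ x : ℝ, w x * (|v x| * |v2 x|) with hJ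
  set Q : ℝ := ∫ x : ℝ, w x * (v x * v4 x) with hQ
  -- identity (i): Cq = -2U
  have e0 : Cq = -2*U := by
    have h := ibp3 w1 v1 v1 hcw1 hcv1 hcv1 hsv1
    rw [← hw2def, ← hv2def] at h
    rw [show (fun x : ℝ => w1 x * (v2 x * v1 x)) = fun x : ℝ => w1 x * (v1 x * v2 x) from
      funext fun x => by ring] at h
    rw [hCq, hU]; linarith [h]
  -- identity (ii): D0 = -2M
  have e1 : D0 = -2*M := by
    have h := ibp3 w1 v v hcw1 hcv hcv hsupp
    rw [← hw2def, ← hv1def] at h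
    rw [show (fun x : ℝ => w1 x * (v1 x * v x)) = fun x : ℝ => w1 x * (v x * v1 x) from
      funext fun x => by ring] at h
    rw [hD0, hM]; linarith [h]
  -- identity (iii): A = -M - E
  have e2 : A = -M - E := by
    have h := ibp3 v1 w v hcv1 hcw hcv hsupp
    rw [← hv2def, ← hw1def, ← hv1def] at h
    rw [show (fun x : ℝ => v2 x * (w x * v x)) = fun x : ℝ => w x * (v x * v2 x) from
      funext fun x => by ring,
      show (fun x : ℝ => v1 x * (w1 x * v x)) = fun x : ℝ => w1 x * (v x * v1 x) from
      funext fun x => by ring,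
      show (fun x : ℝ => v1 x * (w x * v1 x)) = fun x : ℝ => w x * (v1 x * v1 x) from
      funext fun x => by ring] at h
    rw [hA, hM, hE]; linarith [h]
  -- identity (v): G1 = -B - U
  have e3 : (∫ x : ℝ, w1 x * (v x * v3 x)) = -B - U := by
    have h := ibp3 v2 w1 v hcv2 hcw1 hcv hsupp
    rw [← hv3def, ← hw2def, ← hv1def] at h
    rw [show (fun x : ℝ => v3 x * (w1 x * v x)) = fun x : ℝ => w1 x * (v x * v3 x) from
      funext fun x => by ring,
      show (fun x : ℝ => v2 x * (w2 x * v x)) = fun x : ℝ => w2 x * (v x * v2 x) from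
      funext fun x => by ring,
      show (fun x : ℝ => v2 x * (w1 x * v1 x)) = fun x : ℝ => w1 x * (v1 x * v2 x) from
      funext fun x => by ring] at h
    rw [hB, hU]; linarith [h]
  -- identity (vi): G2 = -U - I2
  have e4 : (∫ x : ℝ, w x * (v1 x * v3 x)) = -U - I2 := by
    have h := ibp3 v2 w v1 hcv2 hcw hcv1 hsv1
    rw [← hv3def, ← hw1def, ← hv2def] at h
    rw [show (fun x : ℝ => v3 x * (w x * v1 x)) = fun x : ℝ => w x * (v1 x * v3 x) from
      funext fun x => by ring,
      show (fun x : ℝ => v2 x * (w1 x * v1 x)) = fun x : ℝ => w1 x * (v1 x * v2 x) from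
      funext fun x => by ring,
      show (fun x : ℝ => v2 x * (w x * v2 x)) = fun x : ℝ => w x * (v2 x * v2 x) from
      funext fun x => by ring] at h
    rw [hU, hI2]; linarith [h]
  -- identity (iv): Q = I2 + B - Cq
  have idQ : Q = I2 + B - Cq := by
    have h := ibp3 v3 w v hcv3 hcw hcv hsupp
    rw [← hv4def, ← hw1def, ← hv1def] at h
    rw [show (fun x : ℝ => v4 x * (w x * v x)) = fun x : ℝ => w x * (v x * v4 x) from
      funext fun x => by ring,
      show (fun x : ℝ => v3 x * (w1 x * v x)) = fun x : ℝ => w1 x * (v x * v3 x) from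
      funext fun x => by ring,
      show (fun x : ℝ => v3 x * (w x * v1 x)) = fun x : ℝ => w x * (v1 x * v3 x) from
      funext fun x => by ring] at h
    rw [hQ]; linarith [h, e3, e4, e0, hI2]
  have idE : E = (1/2) * D0 - A := by rw [e2, e1]; ring
  -- pointwise constants
  set δ : ℝ := 1 / (1 + 2 * C₂) with hδdef
  have hδpos : 0 < δ := by positivity
  -- integrability of various integrands
  have hintI0 : Integrable (fun x => w x * (v x * v x)) :=
    intg w _ cw (cv.mul cv) hsupp.mul_left
  have hintI2 : Integrable (fun x => w x * (v2 x * v2 x)) :=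
    intg w _ cw (cv2.mul cv2) hsv2.mul_left
  have hintA : Integrable (fun x => w x * (v x * v2 x)) :=
    intg w _ cw (cv.mul cv2) hsv2.mul_left
  have hintB : Integrable (fun x => w2 x * (v x * v2 x)) :=
    intg w2 _ cw2 (cv.mul cv2) hsv2.mul_left
  have hintE : Integrable (fun x => w x * (v1 x * v1 x)) :=
    intg w _ cw (cv1.mul cv1) hsv1.mul_left
  have hintCq : Integrable (fun x => w2 x * (v1 x * v1 x)) :=
    intg w2 _ cw2 (cv1.mul cv1) hsv1.mul_left
  have hintD0 : Integrable (fun x => w2 x * (v x * v x)) :=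
    intg w2 _ cw2 (cv.mul cv) hsupp.mul_left
  have hintJ : Integrable (fun x => w x * (|v x| * |v2 x|)) :=
    intg w _ cw (cv.abs.mul cv2.abs) (hsv2.abs.mul_left)
  have hintQ : Integrable (fun x => w x * (v x * v4 x)) :=
    intg w _ cw (cv.mul cv4) (hsv3.deriv.mul_left)
  -- integral inequalities
  have hD0le : D0 ≤ C₂ * I0 := by
    rw [hD0, hI0, ← integral_const_mul]
    refine integral_mono hintD0 (hintI0.const_mul C₂) (fun x => ?_)
    have h1 := hw x
    have h2 := le_abs_self (w2 x)
    nlinarith [mul_self_nonneg (v x)]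
  have hCqle : Cq ≤ C₂ * E := by
    rw [hCq, hE, ← integral_const_mul]
    refine integral_mono hintCq (hintE.const_mul C₂) (fun x => ?_)
    have h1 := hw x
    have h2 := le_abs_self (w2 x)
    nlinarith [mul_self_nonneg (v1 x)]
  have hmAle : -A ≤ J := by
    rw [hA, hJ, ← integral_neg]
    refine integral_mono hintA.neg hintJ (fun x => ?_)
    have h1 : -(v x * v2 x) ≤ |v x| * |v2 x| := by
      rw [← abs_mul]; exact neg_le_abs _
    have := (hwpos x).le
    calc -(w x * (v x * v2 x)) = w x * (-(v x * v2 x)) := by ring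
      _ ≤ w x * (|v x| * |v2 x|) := mul_le_mul_of_nonneg_left h1 this
  have hmBle : -B ≤ C₂ * J := by
    rw [hB, hJ, ← integral_const_mul, ← integral_neg]
    refine integral_mono hintB.neg (hintJ.const_mul C₂) (fun x => ?_)
    have h1 : -(w2 x * (v x * v2 x)) ≤ |w2 x| * (|v x| * |v2 x|) := by
      calc -(w2 x * (v x * v2 x)) ≤ |w2 x * (v x * v2 x)| := neg_le_abs _
        _ = |w2 x| * (|v x| * |v2 x|) := by rw [abs_mul, abs_mul]
    refine h1.trans ?_
    have h2 := hw x
    have h3 : (0:ℝ) ≤ |v x| * |v2 x| := by positivity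
    calc |w2 x| * (|v x| * |v2 x|) ≤ (C₂ * w x) * (|v x| * |v2 x|) :=
          mul_le_mul_of_nonneg_right h2 h3
      _ = C₂ * (w x * (|v x| * |v2 x|)) := by ring
  have hJle : J ≤ (1/2) * (δ * I2 + δ⁻¹ * I0) := by
    have key : J ≤ ∫ x : ℝ, ((1/2) * (δ * (w x * (v2 x * v2 x)) + δ⁻¹ * (w x * (v x * v x)))) := by
      rw [hJ]
      refine integral_mono hintJ ?_ (fun x => ?_)
      · exact ((hintI2.const_mul δ).add (hintI0.const_mul δ⁻¹)).const_mul (1/2)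
      · have hδi : δ * δ⁻¹ = 1 := mul_inv_cancel₀ hδpos.ne'
        have hw0 := (hwpos x).le
        have hb : 2 * (|v x| * |v2 x|) ≤ δ * (v2 x * v2 x) + δ⁻¹ * (v x * v x) := by
          have hs := sq_nonneg (δ * |v2 x| - |v x|)
          have hinv : 0 < δ⁻¹ := inv_pos.mpr hδpos
          have hv2a : |v2 x| * |v2 x| = v2 x * v2 x := by
            rw [← abs_mul, abs_mul_self]
          have hva : |v x| * |v x| = v x * v x := by
            rw [← abs_mul, abs_mul_self]
          have hexp : (δ * |v2 x| - |v x|)^2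
              = δ * δ * (|v2 x| * |v2 x|) - 2 * δ * (|v x| * |v2 x|) + |v x| * |v x| := by
            ring
          rw [hexp, hv2a, hva] at hs
          have h1 : 2 * δ * (|v x| * |v2 x|) ≤ δ * (δ * (v2 x * v2 x)) + v x * v x := by
            linarith
          have h4 := mul_le_mul_of_nonneg_left h1 hinv.le
          have hid : δ⁻¹ * δ = 1 := inv_mul_cancel₀ hδpos.ne'
          have h2 : δ⁻¹ * (2 * δ * (|v x| * |v2 x|)) = 2 * (|v x| * |v2 x|) := by
            calc δ⁻¹ * (2 * δ * (|v x| * |v2 x|)) = δ⁻¹ * δ * (2 * (|v x| * |v2 x|)) := by ring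
              _ = 2 * (|v x| * |v2 x|) := by rw [hid, one_mul]
          have h3 : δ⁻¹ * (δ * (δ * (v2 x * v2 x)) + v x * v x)
              = δ * (v2 x * v2 x) + δ⁻¹ * (v x * v x) := by
            calc δ⁻¹ * (δ * (δ * (v2 x * v2 x)) + v x * v x)
                = δ⁻¹ * δ * (δ * (v2 x * v2 x)) + δ⁻¹ * (v x * v x) := by ring
              _ = δ * (v2 x * v2 x) + δ⁻¹ * (v x * v x) := by rw [hid, one_mul]
          rw [h2, h3] at h4
          exact h4
        nlinarith [mul_le_mul_of_nonneg_left hb hw0]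
    refine key.trans (le_of_eq ?_)
    rw [show (fun x : ℝ => (1/2) * (δ * (w x * (v2 x * v2 x)) + δ⁻¹ * (w x * (v x * v x))))
        = fun x : ℝ => (1/2) * (δ * (w x * (v2 x * v2 x))) + (1/2) * (δ⁻¹ * (w x * (v x * v x))) from
      funext fun x => by ring]
    rw [integral_add (((hintI2.const_mul δ).const_mul (1/2)))
      (((hintI0.const_mul δ⁻¹).const_mul (1/2))),
      integral_const_mul, integral_const_mul, integral_const_mul, integral_const_mul,
      hI2, hI0]
    ring
  -- rewrite goal LHS
  have hLHS : (∫ x : ℝ, w x * (v x * (-(v x + 2 * v2 x + v4 x)))) = -I0 - 2*A - Q := by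
    rw [show (fun x : ℝ => w x * (v x * (-(v x + 2 * v2 x + v4 x))))
        = fun x : ℝ => (-1) * (w x * (v x * v x)) + (-2) * (w x * (v x * v2 x))
            + (-1) * (w x * (v x * v4 x)) from funext fun x => by ring]
    have ia : Integrable (fun x : ℝ => (-1) * (w x * (v x * v x))
        + (-2) * (w x * (v x * v2 x))) := (hintI0.const_mul (-1)).add (hintA.const_mul (-2))
    rw [integral_add ia (hintQ.const_mul (-1)),
      integral_add (hintI0.const_mul (-1)) (hintA.const_mul (-2)),
      integral_const_mul, integral_const_mul, integral_const_mul, hI0, hA, hQ]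
    ring
  have hgoal2 : (∫ x : ℝ, w x * v2 x ^ 2) = I2 := by
    rw [hI2]; congr 1; funext x; ring
  have hgoal0 : (∫ x : ℝ, w x * v x ^ 2) = I0 := by
    rw [hI0]; congr 1; funext x; ring
  rw [hLHS, hgoal2, hgoal0]
  -- combine
  have hfinal : -I0 - 2*A - Q ≤ (-1 + (1+C₂)*δ) * I2 + (-1 + (1+C₂)*δ⁻¹ + C₂^2/2) * I0 := by
    have hCq2 : Cq ≤ C₂ * ((1/2) * D0 - A) := by rw [← idE]; exact hCqle
    have h1 : C₂ * ((1/2) * D0 - A) ≤ C₂ * ((1/2) * (C₂ * I0) + J) := by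
      apply mul_le_mul_of_nonneg_left _ hC₂.le
      linarith
    have h2 : (2 + 2*C₂) * J ≤ (2 + 2*C₂) * ((1/2) * (δ * I2 + δ⁻¹ * I0)) := by
      apply mul_le_mul_of_nonneg_left hJle (by linarith)
    nlinarith [hmAle, hmBle, idQ]
  refine hfinal.trans (le_of_eq ?_)
  have hδinv : δ⁻¹ = 1 + 2*C₂ := by
    rw [hδdef, one_div, inv_inv]
  have hc1 : -1 + (1+C₂)*δ = -(C₂ / (1 + 2*C₂)) := by
    rw [hδdef]
    field_simp
    ring
  rw [hc1, hδinv]; ring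
end

section
/- Weighted interpolation inequality for the first derivative (proved inside Lemma 3.2): Let ρ>0 and let C₂>0 be a constant such that |w_ρ''(x)| ≤ C₂ w_ρ(x) for all x∈ℝ, where w_ρ(x) = (1+x²)^{−ρ/2}. Then for every v ∈ C_c^∞(ℝ), ∫_ℝ w_ρ (v')² dx ≤ (C₂/2) ∫_ℝ w_ρ v² dx + (∫_ℝ w_ρ v² dx)^{1/2} (∫_ℝ w_ρ (v'')² dx)^{1/2}. -/
open MeasureTheory Set
open scoped ContDiff

/-- Weighted interpolation inequality for the first derivative
(proved inside Lemma 3.2): for all `v ∈ C_c^∞(ℝ)`,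
`∫ w_ρ (v')² ≤ (C₂/2) ∫ w_ρ v² + (∫ w_ρ v²)^{1/2} (∫ w_ρ (v'')²)^{1/2}`. -/
theorem weighted_interpolation_first_derivative
    (ρ C₂ : ℝ) (hρ : 0 < ρ) (hC₂ : 0 < C₂)
    (hw : ∀ x : ℝ, |deriv (deriv (wgt ρ)) x| ≤ C₂ * wgt ρ x)
    (v : ℝ → ℝ) (hv : ContDiff ℝ (⊤ : ℕ∞) v) (hsupp : HasCompactSupport v) :
    (∫ x : ℝ, wgt ρ x * (deriv v x) ^ 2) ≤
      (C₂ / 2) * (∫ x : ℝ, wgt ρ x * v x ^ 2)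
        + Real.sqrt (∫ x : ℝ, wgt ρ x * v x ^ 2) *
            Real.sqrt (∫ x : ℝ, wgt ρ x * (iteratedDeriv 2 v x) ^ 2) := by
  have hv : ContDiff ℝ ∞ v := hv.of_le (by simp)
  set w : ℝ → ℝ := wgt ρ with hw_def
  -- smoothness of the weight
  have hbase : ∀ x : ℝ, (1 + x ^ 2) ≠ 0 := fun x => by positivity
  have hwC : ContDiff ℝ ∞ w := by
    have h1 : ContDiff ℝ ∞ fun x : ℝ => 1 + x ^ 2 :=
      contDiff_const.add (contDiff_id.pow 2)
    exact h1.rpow_const_of_ne hbase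
  have wpos : ∀ x, 0 < w x := fun x =>
    Real.rpow_pos_of_pos (by positivity) _
  have hw1 : ContDiff ℝ ∞ (deriv w) := (contDiff_infty_iff_deriv.mp hwC).2
  have hw2 : ContDiff ℝ ∞ (deriv (deriv w)) := (contDiff_infty_iff_deriv.mp hw1).2
  have hwd : Differentiable ℝ w := hwC.differentiable (by simp)
  have hwd1 : Differentiable ℝ (deriv w) := hw1.differentiable (by simp)
  -- smoothness of v
  have hv1 : ContDiff ℝ ∞ (deriv v) := (contDiff_infty_iff_deriv.mp hv).2
  have hv2 : ContDiff ℝ ∞ (deriv (deriv v)) := (contDiff_infty_iff_deriv.mp hv1).2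
  have hs1 : HasCompactSupport (deriv v) := hsupp.deriv
  have hs2 : HasCompactSupport (deriv (deriv v)) := hs1.deriv
  have hi2 : iteratedDeriv 2 v = deriv (deriv v) := by
    simp [iteratedDeriv_succ, iteratedDeriv_one]
  rw [hi2]
  -- integrability helper
  have key : ∀ (f g : ℝ → ℝ), Continuous f → Continuous g → HasCompactSupport g →
      Integrable (fun x => f x * g x) := fun f g hf hg hgs =>
    (hf.mul hg).integrable_of_hasCompactSupport hgs.mul_left
  have hsq : HasCompactSupport (fun x => v x ^ 2) :=
    hsupp.comp_left (g := (· ^ 2)) (by simp)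
  have hv' : ∀ x, HasDerivAt v (deriv v x) x := fun x =>
    (hv.differentiable (by simp) x).hasDerivAt
  have hv1' : ∀ x, HasDerivAt (deriv v) (deriv (deriv v) x) x := fun x =>
    (hv1.differentiable (by simp) x).hasDerivAt
  -- first integration by parts: ∫ (w v') v' = -∫ (w v')' v
  have IBP1 : ∫ x : ℝ, (w x * deriv v x) * deriv v x
      = -∫ x : ℝ, (deriv w x * deriv v x + w x * deriv (deriv v) x) * v x := by
    apply integral_mul_deriv_eq_deriv_mul_of_integrable
      (u := fun x => w x * deriv v x)
      (u' := fun x => deriv w x * deriv v x + w x * deriv (deriv v) x)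
      (v := v) (v' := deriv v)
    · intro x _
      exact ((hwd x).hasDerivAt.mul (hv1' x))
    · exact fun x _ => hv' x
    · exact key _ _ (hwC.continuous.mul hv1.continuous) hv1.continuous hs1
    · exact key _ _ ((hw1.continuous.mul hv1.continuous).add
        (hwC.continuous.mul hv2.continuous)) hv.continuous hsupp
    · exact key _ _ (hwC.continuous.mul hv1.continuous) hv.continuous hsupp
  -- second integration by parts: ∫ w' (v²)' = -∫ w'' v²
  have IBP2 : ∫ x : ℝ, deriv w x * ((2:ℝ) * v x ^ 1 * deriv v x)
      = -∫ x : ℝ, deriv (deriv w) x * v x ^ 2 := by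
    apply integral_mul_deriv_eq_deriv_mul_of_integrable
      (u := deriv w) (u' := deriv (deriv w))
      (v := fun x => v x ^ 2) (v' := fun x => (2:ℝ) * v x ^ 1 * deriv v x)
    · intro x _
      exact (hwd1 x).hasDerivAt
    · intro x _
      exact (hv' x).pow 2
    · exact key _ _ hw1.continuous
        ((continuous_const.mul (hv.continuous.pow 1)).mul hv1.continuous) hs1.mul_left
    · exact key _ _ hw2.continuous (hv.continuous.pow 2) hsq
    · exact key _ _ hw1.continuous (hv.continuous.pow 2) hsq
  -- integrable pieces
  have intA : Integrable (fun x => deriv w x * deriv v x * v x) :=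
    key _ _ (hw1.continuous.mul hv1.continuous) hv.continuous hsupp
  have intB : Integrable (fun x => w x * deriv (deriv v) x * v x) :=
    key _ _ (hwC.continuous.mul hv2.continuous) hv.continuous hsupp
  have intJ : Integrable (fun x => deriv (deriv w) x * v x ^ 2) :=
    key _ _ hw2.continuous (hv.continuous.pow 2) hsq
  have intW : Integrable (fun x => w x * v x ^ 2) :=
    key _ _ hwC.continuous (hv.continuous.pow 2) hsq
  set J : ℝ := ∫ x : ℝ, deriv (deriv w) x * v x ^ 2 with hJ
  set K : ℝ := ∫ x : ℝ, w x * deriv (deriv v) x * v x with hK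
  set A : ℝ := ∫ x : ℝ, w x * v x ^ 2 with hA
  set B : ℝ := ∫ x : ℝ, w x * deriv (deriv v) x ^ 2 with hB
  -- deduce ∫ w' v' v = -(1/2) J
  have EA : ∫ x : ℝ, deriv w x * deriv v x * v x = -(1/2) * J := by
    have h2 : ∫ x : ℝ, deriv w x * ((2:ℝ) * v x ^ 1 * deriv v x)
        = 2 * ∫ x : ℝ, deriv w x * deriv v x * v x := by
      rw [← integral_const_mul]
      congr 1; ext x; ring
    rw [h2] at IBP2
    linarith
  -- main identity: ∫ w (v')² = (1/2) J - K
  have main : (∫ x : ℝ, w x * (deriv v x) ^ 2) = (1/2) * J - K := by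
    have h1 : ∫ x : ℝ, w x * (deriv v x) ^ 2
        = ∫ x : ℝ, (w x * deriv v x) * deriv v x := by
      congr 1; ext x; ring
    have h3 : ∫ x : ℝ, (deriv w x * deriv v x + w x * deriv (deriv v) x) * v x
        = (∫ x : ℝ, deriv w x * deriv v x * v x)
          + ∫ x : ℝ, w x * deriv (deriv v) x * v x := by
      rw [← integral_add intA intB]
      congr 1; ext x; ring
    rw [h1, IBP1, h3, EA]
    ring
  rw [main]
  -- bound (1/2) J ≤ (C₂/2) A
  have bound1 : J ≤ C₂ * A := by
    rw [hJ, hA, ← integral_const_mul]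
    apply integral_mono intJ (intW.const_mul _)
    intro x
    have h1 : deriv (deriv w) x * v x ^ 2 ≤ |deriv (deriv w) x| * v x ^ 2 := by
      have : deriv (deriv w) x ≤ |deriv (deriv w) x| := le_abs_self _
      nlinarith [sq_nonneg (v x)]
    have h2 : |deriv (deriv w) x| * v x ^ 2 ≤ (C₂ * w x) * v x ^ 2 := by
      have := hw x
      nlinarith [sq_nonneg (v x)]
    calc deriv (deriv w) x * v x ^ 2 ≤ |deriv (deriv w) x| * v x ^ 2 := h1
      _ ≤ (C₂ * w x) * v x ^ 2 := h2
      _ = C₂ * (w x * v x ^ 2) := by ring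
  -- Cauchy–Schwarz bound for -K
  have bound2 : -K ≤ Real.sqrt A * Real.sqrt B := by
    set f : ℝ → ℝ := fun x => Real.sqrt (w x) * |v x| with hf_def
    set g : ℝ → ℝ := fun x => Real.sqrt (w x) * |deriv (deriv v) x| with hg_def
    have hfc : Continuous f := (Real.continuous_sqrt.comp hwC.continuous).mul
      hv.continuous.abs
    have hgc : Continuous g := (Real.continuous_sqrt.comp hwC.continuous).mul
      hv2.continuous.abs
    have hfs : HasCompactSupport f := hsupp.abs.mul_left
    have hgs : HasCompactSupport g := hs2.abs.mul_left
    have hfg : ∀ x, f x * g x = w x * |v x| * |deriv (deriv v) x| := by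
      intro x
      have : Real.sqrt (w x) * Real.sqrt (w x) = w x :=
        Real.mul_self_sqrt (wpos x).le
      simp only [hf_def, hg_def]
      rw [mul_mul_mul_comm, this, mul_assoc]
    have step1 : -K ≤ ∫ x : ℝ, f x * g x := by
      rw [hK, ← integral_neg]
      apply integral_mono intB.neg ((hfc.mul hgc).integrable_of_hasCompactSupport
        (hgs.mul_left))
      intro x
      show -(w x * deriv (deriv v) x * v x) ≤ f x * g x
      rw [hfg x]
      have h1 : -(w x * deriv (deriv v) x * v x) ≤ |w x * deriv (deriv v) x * v x| :=
        neg_le_abs _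
      have h2 : |w x * deriv (deriv v) x * v x|
          = w x * |v x| * |deriv (deriv v) x| := by
        rw [abs_mul, abs_mul, abs_of_nonneg (wpos x).le]; ring
      simpa [h2] using h1
    have hpq : (2:ℝ).HolderConjugate 2 :=
      (Real.holderConjugate_iff_eq_conjExponent one_lt_two).2 (by norm_num)
    have hf2 : MemLp f (ENNReal.ofReal 2) := hfc.memLp_of_hasCompactSupport hfs
    have hg2 : MemLp g (ENNReal.ofReal 2) := hgc.memLp_of_hasCompactSupport hgs
    have holder := integral_mul_le_Lp_mul_Lq_of_nonneg hpq
      (ae_of_all _ fun x => by positivity)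
      (ae_of_all _ fun x => by positivity) hf2 hg2
    have hfA : ∫ x : ℝ, f x ^ (2:ℝ) = A := by
      rw [hA]
      congr 1; ext x
      have : Real.sqrt (w x) * Real.sqrt (w x) = w x :=
        Real.mul_self_sqrt (wpos x).le
      rw [Real.rpow_two]
      simp only [hf_def]
      nlinarith [this, sq_abs (v x)]
    have hgB : ∫ x : ℝ, g x ^ (2:ℝ) = B := by
      rw [hB]
      congr 1; ext x
      have : Real.sqrt (w x) * Real.sqrt (w x) = w x :=
        Real.mul_self_sqrt (wpos x).le
      rw [Real.rpow_two]
      simp only [hg_def]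
      nlinarith [this, sq_abs (deriv (deriv v) x)]
    have hA0 : 0 ≤ A := by
      rw [hA]; exact integral_nonneg fun x => mul_nonneg (wpos x).le (sq_nonneg _)
    have hB0 : 0 ≤ B := by
      rw [hB]; exact integral_nonneg fun x => mul_nonneg (wpos x).le (sq_nonneg _)
    rw [hfA, hgB] at holder
    calc -K ≤ ∫ x : ℝ, f x * g x := step1
      _ ≤ A ^ ((1:ℝ)/2) * B ^ ((1:ℝ)/2) := holder
      _ = Real.sqrt A * Real.sqrt B := by
          rw [Real.sqrt_eq_rpow, Real.sqrt_eq_rpow]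
  linarith
end

section
/- Translated-weight comparison (proved in Section 3): For every ρ>0, every integer n ≥ 1 and every k ∈ ℤ, sup_{|x|≤n} w_ρ(x+2nk)/w_ρ(x) ≤ (2/(2|k|−1)²)^{ρ/2}, where w_ρ(x) = (1+x²)^{−ρ/2}. -/
open MeasureTheory Set

/-- Translated-weight comparison (Section 3): for `ρ>0`, `n ≥ 1`, `k ∈ ℤ`,
`sup_{|x|≤n} w_ρ(x+2nk)/w_ρ(x) ≤ (2/(2|k|-1)²)^{ρ/2}`. -/
theorem translated_weight_comparison
    (ρ : ℝ) (hρ : 0 < ρ) (n : ℕ) (hn : 1 ≤ n) (k : ℤ) (x : ℝ) (hx : |x| ≤ (n : ℝ)) :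
    wgt ρ (x + 2 * (n : ℝ) * (k : ℝ)) / wgt ρ x ≤
      (2 / (2 * |(k : ℝ)| - 1) ^ 2) ^ (ρ / 2) := by
  unfold wgt
  set y : ℝ := x + 2 * (n : ℝ) * (k : ℝ) with hy
  have hx2 : (0:ℝ) < 1 + x ^ 2 := by positivity
  have hy2 : (0:ℝ) < 1 + y ^ 2 := by positivity
  have hn1 : (1:ℝ) ≤ (n:ℝ) := by exact_mod_cast hn
  have hK : |(k:ℝ)| = 0 ∨ (1:ℝ) ≤ |(k:ℝ)| := by
    rcases eq_or_ne k 0 with h | h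
    · left; simp [h]
    · right
      have := Int.one_le_abs (by exact_mod_cast h : k ≠ 0)
      calc (1:ℝ) ≤ (|k| : ℤ) := by exact_mod_cast this
        _ = |(k:ℝ)| := by push_cast; ring
  have hden : (0:ℝ) < (2 * |(k:ℝ)| - 1) ^ 2 := by
    rcases hK with h | h
    · rw [h]; norm_num
    · nlinarith
  have hx0 : 0 ≤ |x| := abs_nonneg x
  have hxsq : x ^ 2 = |x| ^ 2 := (sq_abs x).symm
  have hksq : (k:ℝ) ^ 2 = |(k:ℝ)| ^ 2 := (sq_abs _).symm
  have hxk : -(|x| * |(k:ℝ)|) ≤ x * k := by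
    have := neg_abs_le (x * (k:ℝ))
    rwa [abs_mul] at this
  have hkey : (1 + x ^ 2) * (2 * |(k:ℝ)| - 1) ^ 2 ≤ 2 * (1 + y ^ 2) := by
    rcases hK with h | h
    · have hk0 : (k:ℝ) = 0 := abs_eq_zero.mp h
      rw [h, hy, hk0]
      nlinarith [sq_nonneg x]
    · rw [hy]
      have h1 : (2 * |(k:ℝ)| - 1) * |x| ≤ 2 * (n:ℝ) * |(k:ℝ)| - |x| := by
        nlinarith [mul_nonneg (sub_nonneg.mpr hx) (by linarith : (0:ℝ) ≤ 2 * |(k:ℝ)| - 1)]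
      have h2 : 2 * |(k:ℝ)| - 1 ≤ 2 * (n:ℝ) * |(k:ℝ)| - |x| := by
        nlinarith [mul_nonneg (by linarith : (0:ℝ) ≤ (n:ℝ) - 1)
          (by linarith : (0:ℝ) ≤ 2 * |(k:ℝ)| - 1)]
      have h1' : ((2 * |(k:ℝ)| - 1) * |x|) ^ 2 ≤ (2 * (n:ℝ) * |(k:ℝ)| - |x|) ^ 2 :=
        pow_le_pow_left₀ (mul_nonneg (by linarith) hx0) h1 2
      have h2' : (2 * |(k:ℝ)| - 1) ^ 2 ≤ (2 * (n:ℝ) * |(k:ℝ)| - |x|) ^ 2 :=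
        pow_le_pow_left₀ (by linarith) h2 2
      have hylb : (2 * (n:ℝ) * |(k:ℝ)| - |x|) ^ 2 ≤ (x + 2 * (n:ℝ) * (k:ℝ)) ^ 2 := by
        have hid : (x + 2 * (n:ℝ) * (k:ℝ)) ^ 2 - (2 * (n:ℝ) * |(k:ℝ)| - |x|) ^ 2
            = 4 * (n:ℝ) * (x * k + |x| * |(k:ℝ)|) + (x ^ 2 - |x| ^ 2)
              + 4 * (n:ℝ) ^ 2 * ((k:ℝ) ^ 2 - |(k:ℝ)| ^ 2) := by ring
        nlinarith [hid, mul_nonneg (by linarith : (0:ℝ) ≤ (n:ℝ))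
          (by linarith : (0:ℝ) ≤ x * k + |x| * |(k:ℝ)|), hxsq, hksq]
      nlinarith [h1', h2', hylb]
  have hbase : (1 + x ^ 2) / (1 + y ^ 2) ≤ 2 / (2 * |(k:ℝ)| - 1) ^ 2 := by
    rw [div_le_div_iff₀ hy2 hden]
    linarith [hkey]
  have hLHS : (1 + y ^ 2) ^ (-(ρ / 2)) / (1 + x ^ 2) ^ (-(ρ / 2))
      = ((1 + x ^ 2) / (1 + y ^ 2)) ^ (ρ / 2) := by
    rw [Real.div_rpow hx2.le hy2.le, Real.rpow_neg hx2.le, Real.rpow_neg hy2.le]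
    field_simp
  rw [hLHS]
  exact Real.rpow_le_rpow (by positivity) hbase (by positivity)
end

section
/- Weighted L⁴ bound for periodic extensions (proved in Section 3): Let ρ>1. There is a constant C_ρ = 2^{1+ρ/2} Σ_{k∈ℕ₀} |2k−1|^{−ρ} depending only on ρ such that the following holds. For every integer n ≥ 1 and every continuous function Z: ℝ → ℝ, let Z^{(n)} be the 2n-periodic function that agrees with Z on [−n,n]. Then ∫_ℝ w_ρ(x) |Z^{(n)}(x)|⁴ dx ≤ C_ρ ∫_ℝ w_ρ(x) |Z(x)|⁴ dx, where w_ρ(x) = (1+x²)^{−ρ/2}. -/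
/-!
On the period `[(2k-1)n, (2k+1)n)` the extension is `Z (x - 2kn)`, and since there
`|x| ≥ (2|k|-1)n` while `1 + (x - 2kn)² ≤ 2n²`, the weight satisfies
`w_ρ(x) ≤ 2^{ρ/2} |2|k|-1|^{-ρ} w_ρ(x - 2kn)`. By translation invariance the `k`-th period
contributes at most `2^{ρ/2} |2|k|-1|^{-ρ} ∫ w_ρ |Z|⁴`, and summing over `k ∈ ℤ`, where each
value of `|k|` occurs at most twice, gives the constant `C_ρ`.
-/

open MeasureTheory Set

/-- The `2n`-periodic extension of `Z`, agreeing with `Z` on `[-n, n)`. -/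
noncomputable def perExt (n : ℕ) (Z : ℝ → ℝ) (x : ℝ) : ℝ :=
  Z (x - 2 * (n : ℝ) * (⌊(x + (n : ℝ)) / (2 * (n : ℝ))⌋ : ℤ))

open scoped ENNReal

lemma lintegral_le_tsum_mul_lintegral_of_le_toIcoMod {p : ℝ} (hp : 0 < p) (a : ℝ)
    {f g : ℝ → ℝ≥0∞} {c : ℤ → ℝ≥0∞} (hc : ∀ k, c k ≠ ∞)
    (hfg : ∀ x, f x ≤ c (toIcoDiv hp a x) * g (toIcoMod hp a x)) :
    ∫⁻ x, f x ≤ (∑' k, c k) * ∫⁻ x, g x := by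
  have hdiv : Measurable (toIcoDiv hp a) := by
    rw [funext (toIcoDiv_eq_floor hp a)]
    exact ((measurable_id.sub_const a).div_const p).floor
  have hpiece : ∀ k, MeasurableSet (toIcoDiv hp a ⁻¹' {k}) :=
    fun k => hdiv (measurableSet_singleton k)
  calc ∫⁻ x, f x = ∑' k, ∫⁻ x in toIcoDiv hp a ⁻¹' {k}, f x := by
        rw [← lintegral_iUnion hpiece (pairwise_disjoint_fiber _), ← preimage_iUnion,
          iUnion_of_singleton, preimage_univ, setLIntegral_univ]
    _ ≤ ∑' k, ∫⁻ x in toIcoDiv hp a ⁻¹' {k}, c k * g (x - k • p) := by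
        refine ENNReal.tsum_le_tsum fun k => ?_
        refine lintegral_mono_ae ((ae_restrict_iff' (hpiece k)).2 (.of_forall fun x hx => ?_))
        rw [← hx, self_sub_toIcoDiv_zsmul]
        exact hfg x
    _ ≤ ∑' k, c k * ∫⁻ x, g (x - k • p) := by
        refine ENNReal.tsum_le_tsum fun k => ?_
        rw [lintegral_const_mul' _ _ (hc k)]
        gcongr
        exact Measure.restrict_le_self
    _ = (∑' k, c k) * ∫⁻ x, g x := by
        simp only [lintegral_sub_right_eq_self]
        exact ENNReal.tsum_mul_right

lemma tsum_int_natAbs_le_two_mul (g : ℕ → ℝ≥0∞) : ∑' k : ℤ, g k.natAbs ≤ 2 * ∑' m, g m := by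
  rw [tsum_of_nat_of_neg_add_one ENNReal.summable ENNReal.summable, two_mul]
  refine add_le_add (le_of_eq ?_) ?_
  · simp
  · exact ENNReal.tsum_comp_le_tsum_of_injective (add_left_injective 1) g

lemma summable_abs_two_mul_sub_one_rpow_neg {ρ : ℝ} (hρ : 1 < ρ) :
    Summable fun k : ℕ => |2 * (k : ℝ) - 1| ^ (-ρ) := by
  rw [← summable_nat_add_iff 1]
  refine ((summable_nat_add_iff 1).2 (Real.summable_nat_rpow.2 (neg_lt_neg hρ))).of_nonneg_of_le
    (fun k => by positivity) fun k => ?_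
  push_cast
  rw [abs_of_pos (by linarith)]
  exact Real.rpow_le_rpow_of_nonpos (by positivity) (by linarith) (by linarith)

lemma tsum_int_ofReal_rpow_natAbs_le {ρ : ℝ} (hρ : 1 < ρ) :
    ∑' k : ℤ, ENNReal.ofReal (2 ^ (ρ / 2) * |2 * (k.natAbs : ℝ) - 1| ^ (-ρ)) ≤
      ENNReal.ofReal (2 ^ (1 + ρ / 2) * ∑' k : ℕ, |2 * (k : ℝ) - 1| ^ (-ρ)) := by
  refine (tsum_int_natAbs_le_two_mul fun m =>
    ENNReal.ofReal (2 ^ (ρ / 2) * |2 * (m : ℝ) - 1| ^ (-ρ))).trans_eq ?_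
  rw [← ENNReal.ofReal_tsum_of_nonneg (fun m => by positivity)
    ((summable_abs_two_mul_sub_one_rpow_neg hρ).mul_left _), tsum_mul_left,
    ← ENNReal.ofReal_ofNat 2, ← ENNReal.ofReal_mul zero_le_two, Real.rpow_add two_pos,
    Real.rpow_one, mul_assoc]

lemma wgt_le_of_sq_mul_le {ρ m x y : ℝ} (hρ : 0 ≤ ρ) (hm : 0 < m)
    (h : m ^ 2 * (1 + y ^ 2) ≤ 2 * (1 + x ^ 2)) :
    wgt ρ x ≤ 2 ^ (ρ / 2) * m ^ (-ρ) * wgt ρ y := by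
  -- `2 ^ (ρ / 2) = 2⁻¹ ^ (-(ρ / 2))` and `m ^ (-ρ) = (m ^ 2) ^ (-(ρ / 2))`
  have hrhs : 2 ^ (ρ / 2) * m ^ (-ρ) * wgt ρ y = (2⁻¹ * m ^ 2 * (1 + y ^ 2)) ^ (-(ρ / 2)) := by
    rw [Real.mul_rpow (by positivity) (by positivity),
      Real.mul_rpow (by positivity) (by positivity), Real.inv_rpow zero_le_two, Real.rpow_neg zero_le_two, inv_inv, ← Real.rpow_natCast,
      ← Real.rpow_mul hm.le, wgt]
    ring_nf
  rw [hrhs, wgt]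
  exact Real.rpow_le_rpow_of_nonpos (by positivity) (by linarith) (by linarith)

lemma sq_mul_one_add_sq_le {N y : ℝ} (hN : 1 ≤ N) (hy : |y| ≤ N) (k : ℤ) :
    (2 * (k.natAbs : ℝ) - 1) ^ 2 * (1 + y ^ 2) ≤ 2 * (1 + (y + k • (2 * N)) ^ 2) := by
  have hy2 : 1 + y ^ 2 ≤ 2 * N ^ 2 := by nlinarith [sq_abs y, abs_nonneg y]
  rcases eq_or_ne k 0 with rfl | hk
  · simp only [Int.natAbs_zero, Nat.cast_zero, zero_smul, add_zero]
    nlinarith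
  set K : ℝ := (k.natAbs : ℝ)
  have hK : 1 ≤ K := Nat.one_le_cast.mpr (Int.natAbs_pos.mpr hk)
  have hshift : |k • (2 * N)| = 2 * N * K := by
    rw [zsmul_eq_mul, abs_mul, ← Int.cast_abs, ← Nat.cast_natAbs, abs_of_pos (by linarith)]
    ring
  have hx : N * (2 * K - 1) ≤ |y + k • (2 * N)| := by
    have := abs_add_le (y + k • (2 * N)) (-y)
    rw [add_neg_cancel_comm, abs_neg, hshift] at this
    linarith
  have hx2 : (N * (2 * K - 1)) ^ 2 ≤ (y + k • (2 * N)) ^ 2 := by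
    rw [← sq_abs (y + _)]
    exact pow_le_pow_left₀ (by nlinarith) hx 2
  nlinarith [mul_le_mul_of_nonneg_left hy2 (sq_nonneg (2 * K - 1))]

lemma one_le_abs_two_mul_natCast_sub_one (m : ℕ) : 1 ≤ |2 * (m : ℝ) - 1| := by
  rcases Nat.eq_zero_or_pos m with rfl | hm
  · simp
  · have : (1 : ℝ) ≤ m := Nat.one_le_cast.mpr hm
    rw [abs_of_nonneg (by linarith)]
    linarith

lemma wgt_add_zsmul_le {ρ N y : ℝ} (hρ : 0 ≤ ρ) (hN : 1 ≤ N) (hy : |y| ≤ N) (k : ℤ) :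
    wgt ρ (y + k • (2 * N)) ≤ 2 ^ (ρ / 2) * |2 * (k.natAbs : ℝ) - 1| ^ (-ρ) * wgt ρ y :=
  wgt_le_of_sq_mul_le hρ (one_pos.trans_le (one_le_abs_two_mul_natCast_sub_one _))
    (by rw [sq_abs]; exact sq_mul_one_add_sq_le hN hy k)

lemma perExt_eq_comp_toIcoMod {n : ℕ} (hp : 0 < 2 * (n : ℝ)) (Z : ℝ → ℝ) (x : ℝ) :
    perExt n Z x = Z (toIcoMod hp (-n) x) := by
  rw [perExt, ← self_sub_toIcoDiv_zsmul, toIcoDiv_eq_floor, zsmul_eq_mul, sub_neg_eq_add, mul_comm]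

theorem periodic_extension_weighted_L4_general
    (ρ : ℝ) (hρ : 1 < ρ) (n : ℕ) (hn : 1 ≤ n) (Z : ℝ → ℝ) :
    (∫⁻ x : ℝ, ENNReal.ofReal (wgt ρ x * |perExt n Z x| ^ 4)) ≤
      ENNReal.ofReal ((2 : ℝ) ^ (1 + ρ / 2) * ∑' k : ℕ, |2 * (k : ℝ) - 1| ^ (-ρ)) *
        ∫⁻ x : ℝ, ENNReal.ofReal (wgt ρ x * |Z x| ^ 4) := by
  have hN : (1 : ℝ) ≤ n := Nat.one_le_cast.mpr hn
  have hp : 0 < 2 * (n : ℝ) := by linarith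
  refine (lintegral_le_tsum_mul_lintegral_of_le_toIcoMod hp (-n)
    (fun _ => ENNReal.ofReal_ne_top) fun x => ?_).trans
    (by gcongr; exact tsum_int_ofReal_rpow_natAbs_le hρ)
  obtain ⟨hy₁, hy₂⟩ := toIcoMod_mem_Ico hp (-n) x
  have hy : |toIcoMod hp (-n) x| ≤ n := abs_le.mpr ⟨hy₁, by linarith⟩
  have hw := wgt_add_zsmul_le (zero_le_one.trans hρ.le) hN hy (toIcoDiv hp (-n) x)
  rw [toIcoMod_add_toIcoDiv_zsmul] at hw
  rw [perExt_eq_comp_toIcoMod hp, ← ENNReal.ofReal_mul (by positivity)]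
  gcongr ENNReal.ofReal ?_
  exact (mul_le_mul_of_nonneg_right hw (by positivity)).trans_eq (by ring)

/-- Weighted `L⁴` bound for periodic extensions (Section 3): for `ρ > 1`,
with `C_ρ = 2^{1+ρ/2} Σ_{k∈ℕ₀} |2k-1|^{-ρ}`, every integer `n ≥ 1`
and continuous `Z : ℝ → ℝ` satisfy
`∫ w_ρ |Z^{(n)}|⁴ ≤ C_ρ ∫ w_ρ |Z|⁴`. -/
theorem periodic_extension_weighted_L4
    (ρ : ℝ) (hρ : 1 < ρ) (n : ℕ) (hn : 1 ≤ n) (Z : ℝ → ℝ) (hZ : Continuous Z) :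
    (∫⁻ x : ℝ, ENNReal.ofReal (wgt ρ x * |perExt n Z x| ^ 4)) ≤
      ENNReal.ofReal ((2 : ℝ) ^ (1 + ρ / 2) * ∑' k : ℕ, |2 * (k : ℝ) - 1| ^ (-ρ)) *
        ∫⁻ x : ℝ, ENNReal.ofReal (wgt ρ x * |Z x| ^ 4) :=
  periodic_extension_weighted_L4_general ρ hρ n hn Z
end

section
/- Convolution operators with Sobolev-weighted kernels are bounded on weighted sup-norm spaces (Lemma 6.9): Let m > 1/2 and κ ∈ (0, m − 1/2). Then there is a constant C, depending only on m and κ, such that for every measurable kernel H:ℝ→ℂ with M := (∫_ℝ (1+z²)^m |H(z)|² dz)^{1/2} < ∞ and every continuous u:ℝ→ℂ with ‖u‖_{C⁰_κ} < ∞, the convolution H*u satisfies ‖H * u‖_{C⁰_κ} ≤ C · M · ‖u‖_{C⁰_κ}. (By Plancherel, M equals the H^m(ℝ) norm of the Fourier transform of H.) -/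
/-!
Split `H (x - y) u y` as `((1 + (x - y)²)^{m/2} ‖H (x - y)‖) · ((1 + (x - y)²)^{-m/2} ‖u y‖)` and
apply Cauchy–Schwarz. By translation invariance the first factor contributes exactly `M`. Since
`‖u y‖ ≤ ‖u‖ (1 + y²)^{κ/2}`, Peetre's inequality `1 + y² ≤ 2 (1 + x²) (1 + (x - y)²)` bounds the
square of the second by `2^κ (1 + x²)^κ ∫ (1 + z²)^{κ - m} dz`, which is finite because
`2 (m - κ) > 1`; the factor `(1 + x²)^{κ/2}` is then cancelled by the weight of the norm.
-/

open MeasureTheory Set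

section CauchySchwarz

variable {α : Type*} [MeasurableSpace α] {μ : Measure α}

theorem integral_mul_le_sqrt_mul_sqrt_of_nonneg {f g : α → ℝ}
    (hf0 : 0 ≤ f) (hg0 : 0 ≤ g) (hf : MemLp f 2 μ) (hg : MemLp g 2 μ) :
    ∫ a, f a * g a ∂μ ≤ √(∫ a, f a ^ 2 ∂μ) * √(∫ a, g a ^ 2 ∂μ) := by
  have hofReal : ENNReal.ofReal 2 = 2 := by norm_num
  have := integral_mul_le_Lp_mul_Lq_of_nonneg Real.HolderConjugate.two_two
    (.of_forall hf0) (.of_forall hg0) (hofReal ▸ hf) (hofReal ▸ hg)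
  simpa [Real.sqrt_eq_rpow] using this

theorem integral_mul_le_sqrt_mul_sqrt_weighted {f g w : α → ℝ}
    (hf0 : 0 ≤ f) (hg0 : 0 ≤ g) (hw0 : ∀ a, 0 < w a)
    (hf : AEStronglyMeasurable f μ) (hg : AEStronglyMeasurable g μ)
    (hw : AEStronglyMeasurable w μ)
    (hfw : Integrable (fun a => w a * f a ^ 2) μ) (hgw : Integrable (fun a => g a ^ 2 / w a) μ) :
    ∫ a, f a * g a ∂μ ≤ √(∫ a, w a * f a ^ 2 ∂μ) * √(∫ a, g a ^ 2 / w a ∂μ) := by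
  have hsqrt : AEStronglyMeasurable (fun a => √(w a)) μ :=
    Real.continuous_sqrt.comp_aestronglyMeasurable hw
  have hF : ∀ a, (√(w a) * f a) ^ 2 = w a * f a ^ 2 := fun a => by
    rw [mul_pow, Real.sq_sqrt (hw0 a).le]
  have hG : ∀ a, (g a / √(w a)) ^ 2 = g a ^ 2 / w a := fun a => by
    rw [div_pow, Real.sq_sqrt (hw0 a).le]
  have hFG : ∀ a, (√(w a) * f a) * (g a / √(w a)) = f a * g a := fun a => by
    have := Real.sqrt_pos.2 (hw0 a)
    field_simp
  have := integral_mul_le_sqrt_mul_sqrt_of_nonneg (μ := μ)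
    (fun a => mul_nonneg (Real.sqrt_nonneg _) (hf0 a))
    (fun a => div_nonneg (hg0 a) (Real.sqrt_nonneg _))
    ((memLp_two_iff_integrable_sq (hsqrt.mul hf)).2 (by simpa only [Pi.mul_apply, hF] using hfw))
    ((memLp_two_iff_integrable_sq (hg.div₀ hsqrt)).2 (by simpa only [Pi.div_apply, hG] using hgw))
  simpa only [hF, hG, hFG] using this

theorem integrable_mul_of_weighted_sq {f g w : α → ℝ} (hw0 : ∀ a, 0 < w a)
    (hf : AEStronglyMeasurable f μ) (hg : AEStronglyMeasurable g μ)
    (hfw : Integrable (fun a => w a * f a ^ 2) μ) (hgw : Integrable (fun a => g a ^ 2 / w a) μ) :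
    Integrable (fun a => f a * g a) μ := by
  refine ((hfw.add hgw).div_const 2).mono' (hf.mul hg) (.of_forall fun a => ?_)
  have hw := hw0 a
  rw [Pi.add_apply, norm_mul, Real.norm_eq_abs, Real.norm_eq_abs,
    le_div_iff₀ two_pos, ← sq_abs (f a), ← sq_abs (g a), add_div' _ _ _ hw.ne', le_div_iff₀ hw]
  nlinarith [sq_nonneg (w a * |f a| - |g a|)]

end CauchySchwarz

section Convolution

variable {G : Type*} [AddGroup G] [MeasurableSpace G] [MeasurableAdd G] [MeasurableNeg G]
  {μ : Measure G} [μ.IsNegInvariant] [μ.IsAddLeftInvariant]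

theorem norm_integral_kernel_mul_le {H u : G → ℂ} {W ρ : G → ℝ} {Mu : ℝ} (x : G)
    (hH : Measurable H) (hW : Measurable W) (hρ : Measurable ρ)
    (hW0 : ∀ z, 0 < W z) (hρ0 : 0 ≤ ρ) (hMu : 0 ≤ Mu) (hu : ∀ y, ‖u y‖ ≤ Mu * √(ρ y))
    (hHW : Integrable (fun z => W z * ‖H z‖ ^ 2) μ)
    (hρW : Integrable (fun y => ρ y / W (x - y)) μ) :
    ‖∫ y, H (x - y) * u y ∂μ‖ ≤
      Mu * √(∫ z, W z * ‖H z‖ ^ 2 ∂μ) * √(∫ y, ρ y / W (x - y) ∂μ) := by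
  have hsq : ∀ y, √(ρ y) ^ 2 = ρ y := fun y => Real.sq_sqrt (hρ0 y)
  have hHx : AEStronglyMeasurable (fun y => ‖H (x - y)‖) μ :=
    (hH.comp (measurable_const_sub x)).norm.aestronglyMeasurable
  have hWx : AEStronglyMeasurable (fun y => W (x - y)) μ :=
    (hW.comp (measurable_const_sub x)).aestronglyMeasurable
  have hHWx := hHW.comp_sub_left x
  have hρWx : Integrable (fun y => √(ρ y) ^ 2 / W (x - y)) μ := by simpa only [hsq] using hρW
  have hcs := integral_mul_le_sqrt_mul_sqrt_weighted (μ := μ)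
    (f := fun y => ‖H (x - y)‖) (g := fun y => √(ρ y)) (w := fun y => W (x - y))
    (fun _ => norm_nonneg _) (fun _ => Real.sqrt_nonneg _) (fun y => hW0 (x - y))
    hHx hρ.sqrt.aestronglyMeasurable hWx hHWx hρWx
  simp only [hsq, integral_sub_left_eq_self (fun z => W z * ‖H z‖ ^ 2) μ x] at hcs
  have hint : Integrable (fun y => ‖H (x - y)‖ * √(ρ y)) μ :=
    integrable_mul_of_weighted_sq (fun y => hW0 (x - y)) hHx hρ.sqrt.aestronglyMeasurable hHWx hρWx
  calc ‖∫ y, H (x - y) * u y ∂μ‖ ≤ ∫ y, ‖H (x - y) * u y‖ ∂μ := norm_integral_le_integral_norm _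
    _ ≤ ∫ y, Mu * (‖H (x - y)‖ * √(ρ y)) ∂μ := by
      refine integral_mono_of_nonneg (.of_forall fun _ => norm_nonneg _) (hint.const_mul Mu)
        (.of_forall fun y => ?_)
      simp only [norm_mul, mul_left_comm Mu]
      exact mul_le_mul_of_nonneg_left (hu y) (norm_nonneg _)
    _ ≤ Mu * √(∫ z, W z * ‖H z‖ ^ 2 ∂μ) * √(∫ y, ρ y / W (x - y) ∂μ) := by
      rw [integral_const_mul, mul_assoc]
      exact mul_le_mul_of_nonneg_left hcs hMu

end Convolution

theorem one_add_sq_le_two_mul_one_add_sq_mul (x y : ℝ) :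
    1 + y ^ 2 ≤ 2 * (1 + x ^ 2) * (1 + (x - y) ^ 2) := by
  nlinarith [sq_nonneg (1 + x * (x - y)), sq_nonneg (x * (x - y)), sq_nonneg (x - y),
    sq_nonneg x]

theorem one_add_sq_rpow_div_le (x y : ℝ) {κ : ℝ} (hκ : 0 ≤ κ) (m : ℝ) :
    (1 + y ^ 2) ^ κ / (1 + (x - y) ^ 2) ^ m ≤
      2 ^ κ * (1 + x ^ 2) ^ κ * (1 + (x - y) ^ 2) ^ (κ - m) := by
  rw [Real.rpow_sub (by positivity), ← mul_div_assoc, ← Real.mul_rpow (by positivity)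
    (by positivity), ← Real.mul_rpow (by positivity) (by positivity)]
  gcongr
  exact one_add_sq_le_two_mul_one_add_sq_mul x y

theorem integrable_one_add_sq_rpow {s : ℝ} (hs : s < -1 / 2) :
    Integrable (fun z : ℝ => (1 + z ^ 2) ^ s) := by
  have := integrable_rpow_neg_one_add_norm_sq (E := ℝ) (μ := volume) (r := -2 * s)
    (by simp; linarith)
  simpa [Real.norm_eq_abs, sq_abs, neg_mul] using this

theorem integral_one_add_sq_rpow_pos {s : ℝ} (hs : s < -1 / 2) :
    0 < ∫ z : ℝ, (1 + z ^ 2) ^ s := by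
  rw [integral_pos_iff_support_of_nonneg (fun z => by positivity) (integrable_one_add_sq_rpow hs),
    Function.support_eq_univ (fun z => by positivity)]
  simp

section Weight

variable (x : ℝ) {κ m : ℝ} (hκ : 0 ≤ κ) (hκm : κ - m < -1 / 2)
include hκ hκm

theorem integrable_one_add_sq_rpow_div :
    Integrable (fun y => (1 + y ^ 2) ^ κ / (1 + (x - y) ^ 2) ^ m) :=
  (((integrable_one_add_sq_rpow hκm).comp_sub_left x).const_mul _).mono'
    (by fun_prop : Measurable _).aestronglyMeasurable
    (.of_forall fun y => by
      rw [Real.norm_of_nonneg (by positivity)]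
      exact one_add_sq_rpow_div_le x y hκ m)

theorem integral_one_add_sq_rpow_div_le :
    ∫ y, (1 + y ^ 2) ^ κ / (1 + (x - y) ^ 2) ^ m ≤
      2 ^ κ * (1 + x ^ 2) ^ κ * ∫ z : ℝ, (1 + z ^ 2) ^ (κ - m) := by
  rw [← integral_sub_left_eq_self (fun z : ℝ => (1 + z ^ 2) ^ (κ - m)) volume x,
    ← integral_const_mul]
  exact integral_mono_of_nonneg (.of_forall fun y => by positivity)
    (((integrable_one_add_sq_rpow hκm).comp_sub_left x).const_mul _)
    (.of_forall fun y => one_add_sq_rpow_div_le x y hκ m)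

end Weight

theorem convolution_sobolev_kernel_bound_general
    (m κ : ℝ) (hκ : κ ∈ Ioo (0 : ℝ) (m - 1 / 2)) :
    ∃ C > (0 : ℝ), ∀ H : ℝ → ℂ, Measurable H →
      MeasureTheory.Integrable (fun z : ℝ => (1 + z ^ 2) ^ m * ‖H z‖ ^ 2) →
      ∀ u : ℝ → ℂ, Continuous u →
        ∀ Mu : ℝ, (∀ x : ℝ, (1 + x ^ 2) ^ (-(κ / 2)) * ‖u x‖ ≤ Mu) →
          ∀ x : ℝ,
            (1 + x ^ 2) ^ (-(κ / 2)) * ‖∫ y : ℝ, H (x - y) * u y‖ ≤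
              C * Real.sqrt (∫ z : ℝ, (1 + z ^ 2) ^ m * ‖H z‖ ^ 2) * Mu := by
  obtain ⟨hκ0, hκm⟩ := hκ
  have hκm' : κ - m < -1 / 2 := by linarith
  set I := ∫ z : ℝ, (1 + z ^ 2) ^ (κ - m)
  have hI := integral_one_add_sq_rpow_pos hκm'
  refine ⟨√(2 ^ κ * I), by positivity, fun H hH hHW u _ Mu hMu x => ?_⟩
  have hweight : ∀ y : ℝ, (1 + y ^ 2) ^ (-(κ / 2)) = (√((1 + y ^ 2) ^ κ))⁻¹ := fun y => by
    rw [Real.sqrt_eq_rpow, ← Real.rpow_mul (by positivity), ← Real.rpow_neg (by positivity)]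
    ring_nf
  have hu : ∀ y, ‖u y‖ ≤ Mu * √((1 + y ^ 2) ^ κ) := fun y => by
    rw [mul_comm, ← inv_mul_le_iff₀ (by positivity), ← hweight]
    exact hMu y
  have hMu0 : 0 ≤ Mu := (mul_nonneg (by positivity) (norm_nonneg _)).trans (hMu 0)
  have hconv := norm_integral_kernel_mul_le x hH (by fun_prop) (by fun_prop)
    (fun z => by positivity) (fun y => by positivity) hMu0 hu hHW
    (integrable_one_add_sq_rpow_div x hκ0.le hκm')
  rw [hweight, inv_mul_le_iff₀ (by positivity)]
  calc ‖∫ y : ℝ, H (x - y) * u y‖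
      ≤ Mu * √(∫ z : ℝ, (1 + z ^ 2) ^ m * ‖H z‖ ^ 2) * √(2 ^ κ * (1 + x ^ 2) ^ κ * I) := by
        grw [hconv, integral_one_add_sq_rpow_div_le x hκ0.le hκm']
    _ = √((1 + x ^ 2) ^ κ) * (√(2 ^ κ * I) * √(∫ z : ℝ, (1 + z ^ 2) ^ m * ‖H z‖ ^ 2) * Mu) := by
        rw [mul_right_comm (2 ^ κ), Real.sqrt_mul (by positivity)]
        ring

/-- Convolution operators with Sobolev-weighted kernels are bounded on weighted
sup-norm spaces (Lemma 6.9): for `m > 1/2` and `κ ∈ (0, m - 1/2)` there is `C`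
such that for every kernel `H` with `M = (∫ (1+z²)^m |H(z)|² dz)^{1/2} < ∞` and
every continuous `u` with `‖u‖_{C⁰_κ} < ∞`, `‖H*u‖_{C⁰_κ} ≤ C M ‖u‖_{C⁰_κ}`. -/
theorem convolution_sobolev_kernel_bound
    (m κ : ℝ) (hm : 1 / 2 < m) (hκ : κ ∈ Ioo (0 : ℝ) (m - 1 / 2)) :
    ∃ C > (0 : ℝ), ∀ H : ℝ → ℂ, Measurable H →
      MeasureTheory.Integrable (fun z : ℝ => (1 + z ^ 2) ^ m * ‖H z‖ ^ 2) →
      ∀ u : ℝ → ℂ, Continuous u →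
        ∀ Mu : ℝ, (∀ x : ℝ, (1 + x ^ 2) ^ (-(κ / 2)) * ‖u x‖ ≤ Mu) →
          ∀ x : ℝ,
            (1 + x ^ 2) ^ (-(κ / 2)) * ‖∫ y : ℝ, H (x - y) * u y‖ ≤
              C * Real.sqrt (∫ z : ℝ, (1 + z ^ 2) ^ m * ‖H z‖ ^ 2) * Mu :=
  convolution_sobolev_kernel_bound_general m κ hκ
end

section
/- Scaled spectral bound for the Swift–Hohenberg operator (used in Section 7, consequence of Lemma 3.2 with the scaled weight): Let ρ>0 and ν∈ℝ. There is a constant C, depending only on ρ and ν, such that for every ε∈(0,1] and every v ∈ C_c^∞(ℝ), ∫_ℝ (1+ε²x²)^{−ρ/2} v(x) · ( −(v + 2v'' + v'''')(x) + νε² v(x) ) dx ≤ C ε² ∫_ℝ (1+ε²x²)^{−ρ/2} v(x)² dx. -/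
open MeasureTheory Set
open Filter Topology

private theorem my_ibp {u v u' v' : ℝ → ℝ}
    (hu : ∀ x, HasDerivAt u (u' x) x) (hv : ∀ x, HasDerivAt v (v' x) x)
    (huv' : Integrable (fun x => u x * v' x)) (hu'v : Integrable (fun x => u' x * v x))
    (hsupp : HasCompactSupport (fun x => u x * v x)) :
    ∫ x : ℝ, u x * v' x = - ∫ x : ℝ, u' x * v x := by
  have hz : Tendsto (u * v) (cocompact ℝ) (𝓝 0) := hsupp.is_zero_at_infty
  rw [cocompact_eq_atBot_atTop] at hz
  simpa using integral_mul_deriv_eq_deriv_mul (fun x _ => hu x) (fun x _ => hv x) huv' hu'v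
    (hz.mono_left le_sup_left) (hz.mono_left le_sup_right)

private theorem my_arith (K1 K2 νa ε a b d J1 J2 J3 J4 T : ℝ)
    (hε : 0 < ε) (hε1 : ε ≤ 1)
    (ha0 : 0 ≤ a) (hb0 : 0 ≤ b) (hd0 : 0 ≤ d)
    (hT : T = -(a + J1 + 2*J2) + νa*ε^2*b)
    (hB : d = b - J3 - J4)
    (h1 : 8*|J1| ≤ a + 16*K2^2*ε^4*b)
    (h2 : 16*|J2| ≤ a + 64*K1^2*ε^2*d)
    (h3 : 32*K1^2*|J3| ≤ a + 256*K1^4*b)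
    (h4 : 2*|J4| ≤ d + K1^2*ε^2*b) :
    T ≤ (2*K2^2 + |νa| + 16*K1^2 + 136*K1^4 + 1) * ε^2 * b := by
  have hε2 : ε^2 ≤ 1 := pow_le_one₀ hε.le hε1
  have e2b : 0 ≤ ε^2*b := mul_nonneg (pow_nonneg hε.le 2) hb0
  have hεa : ε^2*a ≤ a := by nlinarith [mul_le_mul_of_nonneg_right hε2 ha0]
  have hεb : ε^2*b ≤ b := by nlinarith [mul_le_mul_of_nonneg_right hε2 hb0]
  have hε4b : ε^4*b ≤ ε^2*b := by nlinarith [mul_le_mul_of_nonneg_right hε2 e2b]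
  have h16 : 16*K1^2*d ≤ a + 32*K1^2*b + 272*K1^4*b := by
    have s1 : 32*K1^2*d = 32*K1^2*b - 32*K1^2*J3 - 32*K1^2*J4 := by rw [hB]; ring
    have s2 := mul_le_mul_of_nonneg_left (neg_abs_le J3) (show (0:ℝ) ≤ 32*K1^2 by positivity)
    have s3 := mul_le_mul_of_nonneg_left (neg_abs_le J4) (show (0:ℝ) ≤ 32*K1^2 by positivity)
    have s4 := mul_le_mul_of_nonneg_left h4 (show (0:ℝ) ≤ 16*K1^2 by positivity)
    have s5 := mul_le_mul_of_nonneg_left hεb (show (0:ℝ) ≤ 16*K1^4 by positivity)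
    linarith [s1, s2, s3, s4, s5, h3]
  have h8 : 8*K1^2*(ε^2*d) ≤ ε^2/2*a + (16*K1^2+136*K1^4)*(ε^2*b) := by
    have := mul_le_mul_of_nonneg_left h16 (show (0:ℝ) ≤ ε^2/2 by positivity)
    nlinarith [this]
  have hνb : νa*(ε^2*b) ≤ |νa| * (ε ^ 2 * b) := mul_le_mul_of_nonneg_right (le_abs_self νa) e2b
  have hK2e := mul_le_mul_of_nonneg_left hε4b (show (0:ℝ) ≤ 16*K2^2 by positivity)
  nlinarith [hT, neg_abs_le J1, neg_abs_le J2, h1, h2, h8, hεa, hK2e, hνb, ha0, e2b]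

set_option maxHeartbeats 2000000 in
private theorem master (ε K1 K2 νa : ℝ) (hε : 0 < ε) (hε1 : ε ≤ 1) (hK1 : 0 ≤ K1)
    (w w1 w2 v v1 v2 v3 v4 : ℝ → ℝ)
    (hw : ∀ x, HasDerivAt w (w1 x) x) (hw1 : ∀ x, HasDerivAt w1 (w2 x) x)
    (cw2 : Continuous w2)
    (hwpos : ∀ x, 0 < w x)
    (hb1 : ∀ x, |w1 x| ≤ K1 * ε * w x) (hb2 : ∀ x, |w2 x| ≤ K2 * ε ^ 2 * w x)
    (hvd1 : ∀ x, HasDerivAt v (v1 x) x) (hvd2 : ∀ x, HasDerivAt v1 (v2 x) x)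
    (hvd3 : ∀ x, HasDerivAt v2 (v3 x) x) (hvd4 : ∀ x, HasDerivAt v3 (v4 x) x)
    (cv4 : Continuous v4)
    (hs : HasCompactSupport v) :
    (∫ x : ℝ, w x * (v x * (-(v x + 2 * v2 x + v4 x) + νa * ε ^ 2 * v x))) ≤
      (2*K2^2 + |νa| + 16*K1^2 + 136*K1^4 + 1) * ε ^ 2 *
        ∫ x : ℝ, w x * v x ^ 2 := by
  -- continuity
  have cw : Continuous w := Differentiable.continuous fun x => (hw x).differentiableAt
  have cw1 : Continuous w1 := Differentiable.continuous fun x => (hw1 x).differentiableAt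
  have cv : Continuous v := Differentiable.continuous fun x => (hvd1 x).differentiableAt
  have cv1 : Continuous v1 := Differentiable.continuous fun x => (hvd2 x).differentiableAt
  have cv2 : Continuous v2 := Differentiable.continuous fun x => (hvd3 x).differentiableAt
  have cv3 : Continuous v3 := Differentiable.continuous fun x => (hvd4 x).differentiableAt
  -- compact supports
  have sv1 : HasCompactSupport v1 := by
    have h : v1 = deriv v := funext fun x => ((hvd1 x).deriv).symm
    rw [h]; exact hs.deriv
  have sv2 : HasCompactSupport v2 := by
    have h : v2 = deriv v1 := funext fun x => ((hvd2 x).deriv).symm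
    rw [h]; exact sv1.deriv
  have sv3 : HasCompactSupport v3 := by
    have h : v3 = deriv v2 := funext fun x => ((hvd3 x).deriv).symm
    rw [h]; exact sv2.deriv
  have sv4 : HasCompactSupport v4 := by
    have h : v4 = deriv v3 := funext fun x => ((hvd4 x).deriv).symm
    rw [h]; exact sv3.deriv
  -- integrability helper
  have integ : ∀ f g : ℝ → ℝ, Continuous f → Continuous g → HasCompactSupport g →
      Integrable (fun x => f x * g x) := fun f g hf hg hgs =>
    (hf.mul hg).integrable_of_hasCompactSupport hgs.mul_left
  have habs : ∀ f : ℝ → ℝ, |∫ x : ℝ, f x| ≤ ∫ x : ℝ, |f x| := fun f => by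
    simpa [Real.norm_eq_abs] using norm_integral_le_integral_norm (μ := volume) f
  -- integrable facts
  have iA : Integrable (fun x : ℝ => w x * (v x + v2 x) * (v x + v2 x)) :=
    integ _ _ (cw.mul (cv.add cv2)) (cv.add cv2) (hs.add sv2)
  have iB : Integrable (fun x : ℝ => w x * v x * v x) := integ _ _ (cw.mul cv) cv hs
  have iD : Integrable (fun x : ℝ => w x * v1 x * v1 x) := integ _ _ (cw.mul cv1) cv1 sv1
  have iJ1 : Integrable (fun x : ℝ => w2 x * v x * (v x + v2 x)) :=
    integ _ _ (cw2.mul cv) (cv.add cv2) (hs.add sv2)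
  have iJ2 : Integrable (fun x : ℝ => w1 x * v1 x * (v x + v2 x)) :=
    integ _ _ (cw1.mul cv1) (cv.add cv2) (hs.add sv2)
  have iJ3 : Integrable (fun x : ℝ => w x * v x * (v x + v2 x)) :=
    integ _ _ (cw.mul cv) (cv.add cv2) (hs.add sv2)
  have iJ4 : Integrable (fun x : ℝ => w1 x * v x * v1 x) :=
    integ _ _ (cw1.mul cv) cv1 sv1
  have i5 : Integrable (fun x : ℝ => w x * v2 x * (v x + v2 x)) :=
    integ _ _ (cw.mul cv2) (cv.add cv2) (hs.add sv2)
  have i6 : Integrable (fun x : ℝ => w x * v x * (v2 x + v4 x)) :=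
    integ _ _ (cw.mul cv) (cv2.add cv4) (sv2.add sv4)
  have i7 : Integrable (fun x : ℝ => (w1 x * v x + w x * v1 x) * (v1 x + v3 x)) :=
    integ _ _ ((cw1.mul cv).add (cw.mul cv1)) (cv1.add cv3) (sv1.add sv3)
  have i8 : Integrable (fun x : ℝ => (w2 x * v x + w1 x * v1 x) * (v x + v2 x)) :=
    integ _ _ ((cw2.mul cv).add (cw1.mul cv1)) (cv.add cv2) (hs.add sv2)
  have i9 : Integrable (fun x : ℝ => (w1 x * v1 x + w x * v2 x) * (v x + v2 x)) :=
    integ _ _ ((cw1.mul cv1).add (cw.mul cv2)) (cv.add cv2) (hs.add sv2)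
  have i10 : Integrable (fun x : ℝ => w x * v x * v2 x) := integ _ _ (cw.mul cv) cv2 sv2
  have i11 : Integrable (fun x : ℝ => (w1 x * v x + w x * v1 x) * v1 x) :=
    integ _ _ ((cw1.mul cv).add (cw.mul cv1)) cv1 sv1
  have i12 : Integrable (fun x : ℝ => w1 x * v x * (v1 x + v3 x)) :=
    integ _ _ (cw1.mul cv) (cv1.add cv3) (sv1.add sv3)
  have i13 : Integrable (fun x : ℝ => w x * v1 x * (v1 x + v3 x)) :=
    integ _ _ (cw.mul cv1) (cv1.add cv3) (sv1.add sv3)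
  -- integration by parts steps
  have step1 : ∫ x : ℝ, w x * v x * (v2 x + v4 x)
      = -∫ x : ℝ, (w1 x * v x + w x * v1 x) * (v1 x + v3 x) :=
    my_ibp (fun x => (hw x).mul (hvd1 x)) (fun x => (hvd2 x).add (hvd4 x)) i6 i7
      ((sv1.add sv3).mul_left)
  have step2 : ∫ x : ℝ, w1 x * v x * (v1 x + v3 x)
      = -∫ x : ℝ, (w2 x * v x + w1 x * v1 x) * (v x + v2 x) :=
    my_ibp (fun x => (hw1 x).mul (hvd1 x)) (fun x => (hvd1 x).add (hvd3 x)) i12 i8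
      ((hs.add sv2).mul_left)
  have step3 : ∫ x : ℝ, w x * v1 x * (v1 x + v3 x)
      = -∫ x : ℝ, (w1 x * v1 x + w x * v2 x) * (v x + v2 x) :=
    my_ibp (fun x => (hw x).mul (hvd2 x)) (fun x => (hvd1 x).add (hvd3 x)) i13 i9
      ((hs.add sv2).mul_left)
  have step4 : ∫ x : ℝ, w x * v x * v2 x
      = -∫ x : ℝ, (w1 x * v x + w x * v1 x) * v1 x :=
    my_ibp (fun x => (hw x).mul (hvd1 x)) (fun x => hvd2 x) i10 i11 (sv1.mul_left)
  -- splittings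
  have split7 : ∫ x : ℝ, (w1 x * v x + w x * v1 x) * (v1 x + v3 x)
      = (∫ x : ℝ, w1 x * v x * (v1 x + v3 x)) + ∫ x : ℝ, w x * v1 x * (v1 x + v3 x) := by
    rw [← integral_add i12 i13]; congr 1; funext x; ring
  have split8 : ∫ x : ℝ, (w2 x * v x + w1 x * v1 x) * (v x + v2 x)
      = (∫ x : ℝ, w2 x * v x * (v x + v2 x)) + ∫ x : ℝ, w1 x * v1 x * (v x + v2 x) := by
    rw [← integral_add iJ1 iJ2]; congr 1; funext x; ring
  have split9 : ∫ x : ℝ, (w1 x * v1 x + w x * v2 x) * (v x + v2 x)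
      = (∫ x : ℝ, w1 x * v1 x * (v x + v2 x)) + ∫ x : ℝ, w x * v2 x * (v x + v2 x) := by
    rw [← integral_add iJ2 i5]; congr 1; funext x; ring
  have split11 : ∫ x : ℝ, (w1 x * v x + w x * v1 x) * v1 x
      = (∫ x : ℝ, w1 x * v x * v1 x) + ∫ x : ℝ, w x * v1 x * v1 x := by
    rw [← integral_add iJ4 iD]; congr 1; funext x; ring
  have splitA : ∫ x : ℝ, w x * (v x + v2 x) * (v x + v2 x)
      = (∫ x : ℝ, w x * v x * (v x + v2 x)) + ∫ x : ℝ, w x * v2 x * (v x + v2 x) := by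
    rw [← integral_add iJ3 i5]; congr 1; funext x; ring
  have splitB : ∫ x : ℝ, w x * v x * (v x + v2 x)
      = (∫ x : ℝ, w x * v x * v2 x) + ∫ x : ℝ, w x * v x * v x := by
    rw [← integral_add i10 iB]; congr 1; funext x; ring
  -- split of the full integrand
  have hTsplit : (∫ x : ℝ, w x * (v x * (-(v x + 2 * v2 x + v4 x) + νa * ε ^ 2 * v x)))
      = -(∫ x : ℝ, w x * v x * (v x + v2 x)) - (∫ x : ℝ, w x * v x * (v2 x + v4 x))
        + νa * ε ^ 2 * ∫ x : ℝ, w x * v x * v x := by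
    have e : (fun x : ℝ => w x * (v x * (-(v x + 2 * v2 x + v4 x) + νa * ε ^ 2 * v x)))
        = fun x : ℝ => (-(w x * v x * (v x + v2 x)) + -(w x * v x * (v2 x + v4 x)))
            + νa * ε ^ 2 * (w x * v x * v x) := by funext x; ring
    have iJ3n : Integrable (fun x : ℝ => -(w x * v x * (v x + v2 x))) := iJ3.neg
    have i6n : Integrable (fun x : ℝ => -(w x * v x * (v2 x + v4 x))) := i6.neg
    have ifg : Integrable (fun x : ℝ => -(w x * v x * (v x + v2 x))
        + -(w x * v x * (v2 x + v4 x))) := iJ3n.add i6n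
    have iBc : Integrable (fun x : ℝ => νa * ε ^ 2 * (w x * v x * v x)) := iB.const_mul _
    rw [e, integral_add ifg iBc, integral_add iJ3n i6n,
      integral_neg, integral_neg, integral_const_mul]
    ring
  -- key identities
  have hT : (∫ x : ℝ, w x * (v x * (-(v x + 2 * v2 x + v4 x) + νa * ε ^ 2 * v x)))
      = -((∫ x : ℝ, w x * (v x + v2 x) * (v x + v2 x))
          + (∫ x : ℝ, w2 x * v x * (v x + v2 x))
          + 2 * ∫ x : ℝ, w1 x * v1 x * (v x + v2 x))
        + νa * ε ^ 2 * ∫ x : ℝ, w x * v x * v x := by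
    linarith [hTsplit, step1, split7, step2, split8, step3, split9, splitA]
  have hBid : (∫ x : ℝ, w x * v1 x * v1 x)
      = (∫ x : ℝ, w x * v x * v x) - (∫ x : ℝ, w x * v x * (v x + v2 x))
        - ∫ x : ℝ, w1 x * v x * v1 x := by
    linarith [step4, split11, splitB]
  -- nonnegativity
  have ha0 : 0 ≤ ∫ x : ℝ, w x * (v x + v2 x) * (v x + v2 x) := by
    have hpt : ∀ x : ℝ, (0:ℝ) ≤ w x * (v x + v2 x) * (v x + v2 x) := fun x => by
      nlinarith [(hwpos x).le, mul_self_nonneg (v x + v2 x)]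
    exact integral_nonneg hpt
  have hb0 : 0 ≤ ∫ x : ℝ, w x * v x * v x := by
    have hpt : ∀ x : ℝ, (0:ℝ) ≤ w x * v x * v x := fun x => by
      nlinarith [(hwpos x).le, mul_self_nonneg (v x)]
    exact integral_nonneg hpt
  have hd0 : 0 ≤ ∫ x : ℝ, w x * v1 x * v1 x := by
    have hpt : ∀ x : ℝ, (0:ℝ) ≤ w x * v1 x * v1 x := fun x => by
      nlinarith [(hwpos x).le, mul_self_nonneg (v1 x)]
    exact integral_nonneg hpt
  -- bounds on the error terms
  have hJ1b : 8 * |∫ x : ℝ, w2 x * v x * (v x + v2 x)|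
      ≤ (∫ x : ℝ, w x * (v x + v2 x) * (v x + v2 x))
        + 16 * K2 ^ 2 * ε ^ 4 * ∫ x : ℝ, w x * v x * v x := by
    have hpt : ∀ x : ℝ, (8:ℝ) * |w2 x * v x * (v x + v2 x)| ≤
        w x * (v x + v2 x) * (v x + v2 x)
          + 16 * K2 ^ 2 * ε ^ 4 * (w x * v x * v x) := by
      intro x
      have hW := (hwpos x).le
      have conv1 : w x * |v x| * |v x| = w x * v x * v x := by
        rw [mul_assoc, abs_mul_abs_self, ← mul_assoc]
      have conv2 : w x * |v x + v2 x| * |v x + v2 x|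
          = w x * (v x + v2 x) * (v x + v2 x) := by
        rw [mul_assoc, abs_mul_abs_self, ← mul_assoc]
      rw [abs_mul, abs_mul, ← conv1, ← conv2]
      nlinarith [mul_le_mul_of_nonneg_right (hb2 x)
          (mul_nonneg (abs_nonneg (v x)) (abs_nonneg (v x + v2 x))),
        mul_nonneg hW (sq_nonneg (|v x + v2 x| - 4 * K2 * ε ^ 2 * |v x|)),
        abs_nonneg (v x), abs_nonneg (v x + v2 x)]
    have h1 := habs (fun x : ℝ => w2 x * v x * (v x + v2 x))
    have h2 : (∫ x : ℝ, (8:ℝ) * |w2 x * v x * (v x + v2 x)|) ≤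
        ∫ x : ℝ, (w x * (v x + v2 x) * (v x + v2 x)
          + 16 * K2 ^ 2 * ε ^ 4 * (w x * v x * v x)) :=
      integral_mono (iJ1.abs.const_mul 8) (iA.add (iB.const_mul _)) hpt
    rw [integral_const_mul, integral_add iA (iB.const_mul _), integral_const_mul] at h2
    linarith
  have hJ2b : 16 * |∫ x : ℝ, w1 x * v1 x * (v x + v2 x)|
      ≤ (∫ x : ℝ, w x * (v x + v2 x) * (v x + v2 x))
        + 64 * K1 ^ 2 * ε ^ 2 * ∫ x : ℝ, w x * v1 x * v1 x := by
    have hpt : ∀ x : ℝ, (16:ℝ) * |w1 x * v1 x * (v x + v2 x)| ≤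
        w x * (v x + v2 x) * (v x + v2 x)
          + 64 * K1 ^ 2 * ε ^ 2 * (w x * v1 x * v1 x) := by
      intro x
      have hW := (hwpos x).le
      have conv1 : w x * |v1 x| * |v1 x| = w x * v1 x * v1 x := by
        rw [mul_assoc, abs_mul_abs_self, ← mul_assoc]
      have conv2 : w x * |v x + v2 x| * |v x + v2 x|
          = w x * (v x + v2 x) * (v x + v2 x) := by
        rw [mul_assoc, abs_mul_abs_self, ← mul_assoc]
      rw [abs_mul, abs_mul, ← conv1, ← conv2]
      nlinarith [mul_le_mul_of_nonneg_right (hb1 x)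
          (mul_nonneg (abs_nonneg (v1 x)) (abs_nonneg (v x + v2 x))),
        mul_nonneg hW (sq_nonneg (|v x + v2 x| - 8 * K1 * ε * |v1 x|)),
        abs_nonneg (v1 x), abs_nonneg (v x + v2 x)]
    have h1 := habs (fun x : ℝ => w1 x * v1 x * (v x + v2 x))
    have h2 : (∫ x : ℝ, (16:ℝ) * |w1 x * v1 x * (v x + v2 x)|) ≤
        ∫ x : ℝ, (w x * (v x + v2 x) * (v x + v2 x)
          + 64 * K1 ^ 2 * ε ^ 2 * (w x * v1 x * v1 x)) :=
      integral_mono (iJ2.abs.const_mul 16) (iA.add (iD.const_mul _)) hpt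
    rw [integral_const_mul, integral_add iA (iD.const_mul _), integral_const_mul] at h2
    linarith
  have hJ3b : 32 * K1 ^ 2 * |∫ x : ℝ, w x * v x * (v x + v2 x)|
      ≤ (∫ x : ℝ, w x * (v x + v2 x) * (v x + v2 x))
        + 256 * K1 ^ 4 * ∫ x : ℝ, w x * v x * v x := by
    have hpt : ∀ x : ℝ, 32 * K1 ^ 2 * |w x * v x * (v x + v2 x)| ≤
        w x * (v x + v2 x) * (v x + v2 x)
          + 256 * K1 ^ 4 * (w x * v x * v x) := by
      intro x
      have hW := (hwpos x).le
      have conv1 : w x * |v x| * |v x| = w x * v x * v x := by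
        rw [mul_assoc, abs_mul_abs_self, ← mul_assoc]
      have conv2 : w x * |v x + v2 x| * |v x + v2 x|
          = w x * (v x + v2 x) * (v x + v2 x) := by
        rw [mul_assoc, abs_mul_abs_self, ← mul_assoc]
      rw [abs_mul, abs_mul, abs_of_pos (hwpos x), ← conv1, ← conv2]
      nlinarith [mul_nonneg hW (sq_nonneg (|v x + v2 x| - 16 * K1 ^ 2 * |v x|)),
        abs_nonneg (v x), abs_nonneg (v x + v2 x)]
    have h1 := habs (fun x : ℝ => w x * v x * (v x + v2 x))
    have h2 : (∫ x : ℝ, 32 * K1 ^ 2 * |w x * v x * (v x + v2 x)|) ≤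
        ∫ x : ℝ, (w x * (v x + v2 x) * (v x + v2 x)
          + 256 * K1 ^ 4 * (w x * v x * v x)) :=
      integral_mono (iJ3.abs.const_mul _) (iA.add (iB.const_mul _)) hpt
    rw [integral_const_mul, integral_add iA (iB.const_mul _), integral_const_mul] at h2
    nlinarith [h2, mul_le_mul_of_nonneg_left h1 (show (0:ℝ) ≤ 32 * K1 ^ 2 by positivity)]
  have hJ4b : 2 * |∫ x : ℝ, w1 x * v x * v1 x|
      ≤ (∫ x : ℝ, w x * v1 x * v1 x)
        + K1 ^ 2 * ε ^ 2 * ∫ x : ℝ, w x * v x * v x := by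
    have hpt : ∀ x : ℝ, (2:ℝ) * |w1 x * v x * v1 x| ≤
        w x * v1 x * v1 x + K1 ^ 2 * ε ^ 2 * (w x * v x * v x) := by
      intro x
      have hW := (hwpos x).le
      have conv1 : w x * |v x| * |v x| = w x * v x * v x := by
        rw [mul_assoc, abs_mul_abs_self, ← mul_assoc]
      have convD : w x * |v1 x| * |v1 x| = w x * v1 x * v1 x := by
        rw [mul_assoc, abs_mul_abs_self, ← mul_assoc]
      rw [abs_mul, abs_mul, ← conv1, ← convD]
      nlinarith [mul_le_mul_of_nonneg_right (hb1 x)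
          (mul_nonneg (abs_nonneg (v x)) (abs_nonneg (v1 x))),
        mul_nonneg hW (sq_nonneg (|v1 x| - K1 * ε * |v x|)),
        abs_nonneg (v x), abs_nonneg (v1 x)]
    have h1 := habs (fun x : ℝ => w1 x * v x * v1 x)
    have h2 : (∫ x : ℝ, (2:ℝ) * |w1 x * v x * v1 x|) ≤
        ∫ x : ℝ, (w x * v1 x * v1 x + K1 ^ 2 * ε ^ 2 * (w x * v x * v x)) :=
      integral_mono (iJ4.abs.const_mul 2) (iD.add (iB.const_mul _)) hpt
    rw [integral_const_mul, integral_add iD (iB.const_mul _), integral_const_mul] at h2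
    linarith
  -- conclude
  have hbsq : (∫ x : ℝ, w x * v x ^ 2) = ∫ x : ℝ, w x * v x * v x := by
    congr 1; funext x; ring
  rw [hbsq]
  exact my_arith K1 K2 νa ε _ _ _ _ _ _ _ _ hε hε1 ha0 hb0 hd0 hT hBid hJ1b hJ2b hJ3b hJ4b


/-- Scaled spectral bound for the Swift–Hohenberg operator (Section 7,
consequence of Lemma 3.2 with the scaled weight `w_{ρ,ε}(x) = (1+ε²x²)^{-ρ/2}`):
there is `C` depending only on `ρ, ν` such that for every `ε ∈ (0,1]` and every
`v ∈ C_c^∞(ℝ)`,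
`∫ w_{ρ,ε} v (L_ν v) ≤ C ε² ∫ w_{ρ,ε} v²` with `L_ν v = -(v+2v''+v'''') + νε²v`. -/
theorem scaled_spectral_bound
    (ρ ν : ℝ) (hρ : 0 < ρ) :
    ∃ C > (0 : ℝ), ∀ ε : ℝ, 0 < ε → ε ≤ 1 →
      ∀ v : ℝ → ℝ, ContDiff ℝ (⊤ : ℕ∞) v → HasCompactSupport v →
        (∫ x : ℝ, (1 + ε ^ 2 * x ^ 2) ^ (-(ρ / 2)) *
            (v x * (-(v x + 2 * iteratedDeriv 2 v x + iteratedDeriv 4 v x)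
              + ν * ε ^ 2 * v x))) ≤
          C * ε ^ 2 * ∫ x : ℝ, (1 + ε ^ 2 * x ^ 2) ^ (-(ρ / 2)) * v x ^ 2 := by
  refine ⟨2 * (ρ ^ 2 + 3 * ρ) ^ 2 + |ν| + 16 * ρ ^ 2 + 136 * ρ ^ 4 + 1, by positivity, ?_⟩
  intro ε hε hε1 v hv hsupp
  -- derivatives of v
  have hv0 : ContDiff ℝ (⊤ : ℕ∞) v := hv.of_le (by simp)
  have c1 : ContDiff ℝ (⊤ : ℕ∞) (deriv v) := (contDiff_infty_iff_deriv.mp hv0).2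
  have c2 : ContDiff ℝ (⊤ : ℕ∞) (deriv (deriv v)) := (contDiff_infty_iff_deriv.mp c1).2
  have c3 : ContDiff ℝ (⊤ : ℕ∞) (deriv (deriv (deriv v))) := (contDiff_infty_iff_deriv.mp c2).2
  have c4 : ContDiff ℝ (⊤ : ℕ∞) (deriv (deriv (deriv (deriv v)))) :=
    (contDiff_infty_iff_deriv.mp c3).2
  have hvd1 : ∀ x, HasDerivAt v (deriv v x) x := fun x =>
    (hv0.differentiable (by simp) x).hasDerivAt
  have hvd2 : ∀ x, HasDerivAt (deriv v) (deriv (deriv v) x) x := fun x =>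
    (c1.differentiable (by simp) x).hasDerivAt
  have hvd3 : ∀ x, HasDerivAt (deriv (deriv v)) (deriv (deriv (deriv v)) x) x := fun x =>
    (c2.differentiable (by simp) x).hasDerivAt
  have hvd4 : ∀ x, HasDerivAt (deriv (deriv (deriv v))) (deriv (deriv (deriv (deriv v))) x) x :=
    fun x => (c3.differentiable (by simp) x).hasDerivAt
  have cv4 : Continuous (deriv (deriv (deriv (deriv v)))) := c4.continuous
  -- weight facts
  have hs_pos : ∀ x : ℝ, (0:ℝ) < 1 + ε ^ 2 * x ^ 2 := fun x => by positivity
  have hbase : ∀ x : ℝ, HasDerivAt (fun y : ℝ => 1 + ε ^ 2 * y ^ 2) (2 * ε ^ 2 * x) x := by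
    intro x
    have h0 : HasDerivAt (fun y : ℝ => y ^ 2) (2 * x) x := by simpa using hasDerivAt_pow 2 x
    have h1 := (h0.const_mul (ε ^ 2)).const_add 1
    exact h1.congr_deriv (by ring)
  have hw : ∀ x : ℝ, HasDerivAt (fun y : ℝ => (1 + ε ^ 2 * y ^ 2) ^ (-(ρ / 2)))
      ((-(ρ * ε ^ 2 * x)) * (1 + ε ^ 2 * x ^ 2) ^ (-(ρ / 2) - 1)) x := by
    intro x
    have h := (hbase x).rpow_const (p := -(ρ / 2)) (Or.inl (ne_of_gt (hs_pos x)))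
    convert h using 1
    ring
  have hw1 : ∀ x : ℝ, HasDerivAt
      (fun y : ℝ => (-(ρ * ε ^ 2 * y)) * (1 + ε ^ 2 * y ^ 2) ^ (-(ρ / 2) - 1))
      ((-(ρ * ε ^ 2)) * (1 + ε ^ 2 * x ^ 2) ^ (-(ρ / 2) - 1)
        + (ρ * (ρ + 2) * ε ^ 4 * (x * x)) * (1 + ε ^ 2 * x ^ 2) ^ (-(ρ / 2) - 1 - 1)) x := by
    intro x
    have ha : HasDerivAt (fun y : ℝ => -(ρ * ε ^ 2 * y)) (-(ρ * ε ^ 2)) x := by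
      simpa using ((hasDerivAt_id x).const_mul (ρ * ε ^ 2)).fun_neg
    have hp := (hbase x).rpow_const (p := -(ρ / 2) - 1) (Or.inl (ne_of_gt (hs_pos x)))
    have hm := ha.mul hp
    exact hm.congr_deriv (by ring)
  have cw2 : Continuous (fun x : ℝ => (-(ρ * ε ^ 2)) * (1 + ε ^ 2 * x ^ 2) ^ (-(ρ / 2) - 1)
      + (ρ * (ρ + 2) * ε ^ 4 * (x * x)) * (1 + ε ^ 2 * x ^ 2) ^ (-(ρ / 2) - 1 - 1)) := by
    have hb : Continuous (fun x : ℝ => 1 + ε ^ 2 * x ^ 2) :=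
      continuous_const.add (continuous_const.mul (continuous_pow 2))
    have hp : ∀ p : ℝ, Continuous (fun x : ℝ => (1 + ε ^ 2 * x ^ 2) ^ p) := fun p =>
      hb.rpow_const (fun x => Or.inl (ne_of_gt (hs_pos x)))
    exact (continuous_const.mul (hp _)).add
      ((continuous_const.mul (continuous_id.mul continuous_id)).mul (hp _))
  have hwpos : ∀ x : ℝ, (0:ℝ) < (1 + ε ^ 2 * x ^ 2) ^ (-(ρ / 2)) := fun x =>
    Real.rpow_pos_of_pos (hs_pos x) _
  have hb1 : ∀ x : ℝ, |(-(ρ * ε ^ 2 * x)) * (1 + ε ^ 2 * x ^ 2) ^ (-(ρ / 2) - 1)|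
      ≤ ρ * ε * (1 + ε ^ 2 * x ^ 2) ^ (-(ρ / 2)) := by
    intro x
    have hs := hs_pos x
    have hs1 : (1:ℝ) ≤ 1 + ε ^ 2 * x ^ 2 := by nlinarith [sq_nonneg (ε * x)]
    have hW := Real.rpow_pos_of_pos hs (-(ρ / 2))
    have e1 : (1 + ε ^ 2 * x ^ 2) ^ (-(ρ / 2) - 1)
        = (1 + ε ^ 2 * x ^ 2) ^ (-(ρ / 2)) / (1 + ε ^ 2 * x ^ 2) := by
      rw [Real.rpow_sub hs, Real.rpow_one]
    have hεx : ε * |x| ≤ 1 + ε ^ 2 * x ^ 2 := by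
      rw [← sq_abs x]
      nlinarith [sq_nonneg (ε * |x| - 1), mul_nonneg hε.le (abs_nonneg x)]
    rw [abs_mul, abs_neg, abs_mul, abs_mul, abs_of_pos hρ, abs_of_pos (pow_pos hε 2),
      abs_of_pos (Real.rpow_pos_of_pos hs _), e1, ← mul_div_assoc, div_le_iff₀ hs]
    nlinarith [mul_le_mul_of_nonneg_left hεx
      (mul_nonneg (mul_nonneg hρ.le hε.le) hW.le)]
  have hb2 : ∀ x : ℝ, |(-(ρ * ε ^ 2)) * (1 + ε ^ 2 * x ^ 2) ^ (-(ρ / 2) - 1)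
        + (ρ * (ρ + 2) * ε ^ 4 * (x * x)) * (1 + ε ^ 2 * x ^ 2) ^ (-(ρ / 2) - 1 - 1)|
      ≤ (ρ ^ 2 + 3 * ρ) * ε ^ 2 * (1 + ε ^ 2 * x ^ 2) ^ (-(ρ / 2)) := by
    intro x
    have hs := hs_pos x
    have hs1 : (1:ℝ) ≤ 1 + ε ^ 2 * x ^ 2 := by nlinarith [sq_nonneg (ε * x)]
    have hW := Real.rpow_pos_of_pos hs (-(ρ / 2))
    have e1 : (1 + ε ^ 2 * x ^ 2) ^ (-(ρ / 2) - 1)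
        = (1 + ε ^ 2 * x ^ 2) ^ (-(ρ / 2)) / (1 + ε ^ 2 * x ^ 2) := by
      rw [Real.rpow_sub hs, Real.rpow_one]
    have e2 : (1 + ε ^ 2 * x ^ 2) ^ (-(ρ / 2) - 1 - 1)
        = (1 + ε ^ 2 * x ^ 2) ^ (-(ρ / 2)) / (1 + ε ^ 2 * x ^ 2) / (1 + ε ^ 2 * x ^ 2) := by
      rw [Real.rpow_sub hs, Real.rpow_sub hs, Real.rpow_one]
    have t1 : |(-(ρ * ε ^ 2)) * (1 + ε ^ 2 * x ^ 2) ^ (-(ρ / 2) - 1)|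
        ≤ ρ * ε ^ 2 * (1 + ε ^ 2 * x ^ 2) ^ (-(ρ / 2)) := by
      rw [abs_mul, abs_neg, abs_of_pos (mul_pos hρ (pow_pos hε 2)),
        abs_of_pos (Real.rpow_pos_of_pos hs _), e1]
      exact mul_le_mul_of_nonneg_left (div_le_self hW.le hs1)
        (mul_nonneg hρ.le (pow_nonneg hε.le 2))
    have t2 : |(ρ * (ρ + 2) * ε ^ 4 * (x * x)) * (1 + ε ^ 2 * x ^ 2) ^ (-(ρ / 2) - 1 - 1)|
        ≤ ρ * (ρ + 2) * ε ^ 2 * (1 + ε ^ 2 * x ^ 2) ^ (-(ρ / 2)) := by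
      have hC : (0:ℝ) ≤ ρ * (ρ + 2) * ε ^ 4 * (x * x) :=
        mul_nonneg (mul_nonneg (mul_nonneg hρ.le (by linarith)) (pow_nonneg hε.le 4))
          (mul_self_nonneg x)
      have hC0 : (0:ℝ) ≤ ρ * (ρ + 2) * ε ^ 2 * (1 + ε ^ 2 * x ^ 2) ^ (-(ρ / 2)) :=
        mul_nonneg (mul_nonneg (mul_nonneg hρ.le (by linarith)) (pow_nonneg hε.le 2)) hW.le
      have hsx : ε ^ 2 * x ^ 2 ≤ 1 + ε ^ 2 * x ^ 2 := by linarith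
      rw [abs_of_nonneg (mul_nonneg hC (Real.rpow_pos_of_pos hs _).le), e2,
        ← mul_div_assoc, ← mul_div_assoc, div_le_iff₀ hs, div_le_iff₀ hs]
      nlinarith [mul_le_mul_of_nonneg_left hsx hC0, mul_nonneg hC0 hs.le, hs1]
    calc |(-(ρ * ε ^ 2)) * (1 + ε ^ 2 * x ^ 2) ^ (-(ρ / 2) - 1)
        + (ρ * (ρ + 2) * ε ^ 4 * (x * x)) * (1 + ε ^ 2 * x ^ 2) ^ (-(ρ / 2) - 1 - 1)|
        ≤ |(-(ρ * ε ^ 2)) * (1 + ε ^ 2 * x ^ 2) ^ (-(ρ / 2) - 1)|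
          + |(ρ * (ρ + 2) * ε ^ 4 * (x * x)) * (1 + ε ^ 2 * x ^ 2) ^ (-(ρ / 2) - 1 - 1)| :=
          abs_add_le _ _
      _ ≤ (ρ ^ 2 + 3 * ρ) * ε ^ 2 * (1 + ε ^ 2 * x ^ 2) ^ (-(ρ / 2)) := by nlinarith [t1, t2]
  -- rewrite iterated derivatives
  have h2 : iteratedDeriv 2 v = deriv (deriv v) := by
    rw [show (2:ℕ) = 0+1+1 by norm_num]
    simp only [iteratedDeriv_succ, iteratedDeriv_zero]
  have h4 : iteratedDeriv 4 v = deriv (deriv (deriv (deriv v))) := by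
    rw [show (4:ℕ) = 0+1+1+1+1 by norm_num]
    simp only [iteratedDeriv_succ, iteratedDeriv_zero]
  rw [h2, h4]
  exact master ε ρ (ρ ^ 2 + 3 * ρ) ν hε hε1 hρ.le
    (fun x : ℝ => (1 + ε ^ 2 * x ^ 2) ^ (-(ρ / 2)))
    (fun x : ℝ => (-(ρ * ε ^ 2 * x)) * (1 + ε ^ 2 * x ^ 2) ^ (-(ρ / 2) - 1))
    (fun x : ℝ => (-(ρ * ε ^ 2)) * (1 + ε ^ 2 * x ^ 2) ^ (-(ρ / 2) - 1)
      + (ρ * (ρ + 2) * ε ^ 4 * (x * x)) * (1 + ε ^ 2 * x ^ 2) ^ (-(ρ / 2) - 1 - 1))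
    v (deriv v) (deriv (deriv v)) (deriv (deriv (deriv v))) (deriv (deriv (deriv (deriv v))))
    hw hw1 cw2 hwpos hb1 hb2 hvd1 hvd2 hvd3 hvd4 cv4 hsupp
end
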